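/- arXiv:0810.0187 — 13 statements merged into one kernel-verified Lean document; each statement's English description precedes it below -/
import Mathlib

section
/- Let v : Fin 4 → ℝ³ be an affinely independent family with Δ = convexHull ℝ (Set.range v), and let e be a point of the topological interior of Δ. Then Δ is the union of the four subtetrahedra: convexHull ℝ (Set.range v) = ⋃ i, convexHull ℝ ((Set.range v \ {v i}) ∪ {e}). -/
/-!
For a finite point set `s` and any `e` in its convex hull,
`conv s = ⋃ p ∈ s, conv ((s \ {p}) ∪ {e})`. Write `x = ∑ w y • y` and `e = ∑ c y • y` as convex
combinations and let `t ≥ 0` be the largest number with `t c ≤ w`. Then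
`x = t • e + ∑ (w y - t c y) • y` is a convex combination in which the coefficient of some
vertex `p` vanishes, so `x` lies in the hull of `e` and `s \ {p}`.
-/

open Finset

section

variable {R : Type*} [Field R] [LinearOrder R] [IsStrictOrderedRing R]

theorem exists_max_mul_le {ι : Type*} {s : Finset ι} {w c : ι → R}
    (hw : ∀ i ∈ s, 0 ≤ w i) (hpos : ∃ i ∈ s, 0 < c i) :
    ∃ t, 0 ≤ t ∧ (∀ i ∈ s, 0 ≤ c i → t * c i ≤ w i) ∧ ∃ p ∈ s, w p = t * c p := by
  classical
  obtain ⟨p, hp, hmin⟩ := (s.filter (0 < c ·)).exists_min_image (fun i => w i / c i)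
    (by simpa [Finset.Nonempty] using hpos)
  rw [mem_filter] at hp
  refine ⟨w p / c p, div_nonneg (hw p hp.1) hp.2.le, fun i hi hci => ?_, p, hp.1,
    (div_mul_cancel₀ _ hp.2.ne').symm⟩
  rcases hci.eq_or_lt with hci | hci
  · simpa [← hci] using hw i hi
  · exact (le_div_iff₀ hci).mp (hmin i (mem_filter.mpr ⟨hi, hci⟩))

variable {E : Type*} [AddCommGroup E] [Module R E]

theorem sum_smul_add_smul_mem_convexHull_insert {ι : Type*} {s : Finset ι} {a : ι → R} {b : R}
    {z : ι → E} {e : E} {T : Set E} (ha : ∀ i ∈ s, 0 ≤ a i) (hb : 0 ≤ b)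
    (hsum : ∑ i ∈ s, a i + b = 1) (hz : ∀ i ∈ s, z i ∈ T) :
    ∑ i ∈ s, a i • z i + b • e ∈ convexHull R (insert e T) := by
  have := (convex_convexHull R (insert e T)).sum_mem (t := insertNone s)
    (w := fun o => o.elim b a) (z := fun o => o.elim e z) ?_ ?_ ?_
  · simpa [sum_insertNone, add_comm] using this
  · exact forall_mem_insertNone.mpr ⟨hb, ha⟩
  · simpa [sum_insertNone, add_comm] using hsum
  · exact forall_mem_insertNone.mpr ⟨subset_convexHull R _ (Set.mem_insert e T),
      fun i hi => subset_convexHull R _ (Set.mem_insert_of_mem e (hz i hi))⟩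

theorem exists_mem_convexHull_insert_erase [DecidableEq E] {s : Finset E} {e x : E}
    (he : e ∈ convexHull R ↑s) (hx : x ∈ convexHull R ↑s) :
    ∃ p ∈ s, x ∈ convexHull R (insert e ↑(s.erase p)) := by
  obtain ⟨c, hc0, hc1, rfl⟩ := mem_convexHull'.mp he
  obtain ⟨w, hw0, hw1, rfl⟩ := mem_convexHull'.mp hx
  obtain ⟨t, ht0, hle, p, hp, hwp⟩ :=
    exists_max_mul_le hw0 (exists_lt_of_sum_lt (f := 0) (g := c) (by simp [hc1]))
  have hp_zero : w p - t * c p = 0 := sub_eq_zero.mpr hwp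
  have hsplit : ∑ y ∈ s, w y • y =
      ∑ y ∈ s.erase p, (w y - t * c y) • y + t • ∑ y ∈ s, c y • y := by
    rw [sum_erase _ (by rw [hp_zero, zero_smul]), smul_sum, ← sub_eq_iff_eq_add,
      ← sum_sub_distrib]
    simp only [sub_smul, mul_smul]
  refine ⟨p, hp, hsplit ▸ sum_smul_add_smul_mem_convexHull_insert (fun y hy => ?_) ht0 ?_
    (fun y hy => hy)⟩
  · exact sub_nonneg.mpr (hle y (mem_of_mem_erase hy) (hc0 y (mem_of_mem_erase hy)))
  · rw [sum_erase (f := fun y => w y - t * c y) s hp_zero, sum_sub_distrib, ← mul_sum, hw1, hc1,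
      mul_one, sub_add_cancel]

theorem convexHull_eq_biUnion_convexHull_insert_erase [DecidableEq E] (s : Finset E) {e : E}
    (he : e ∈ convexHull R ↑s) :
    convexHull R ↑s = ⋃ p ∈ s, convexHull R (insert e ↑(s.erase p)) := by
  refine Set.Subset.antisymm (fun x hx => ?_) (Set.iUnion₂_subset fun p _ => ?_)
  · obtain ⟨p, hp, hxp⟩ := exists_mem_convexHull_insert_erase he hx
    exact Set.mem_biUnion hp hxp
  · exact convexHull_min (Set.insert_subset he ((coe_subset.mpr (erase_subset p s)).trans
      (subset_convexHull R _))) (convex_convexHull R _)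

end

theorem refinement_union_general
    (v : Fin 4 → EuclideanSpace ℝ (Fin 3))
    (e : EuclideanSpace ℝ (Fin 3))
    (he : e ∈ interior (convexHull ℝ (Set.range v))) :
    convexHull ℝ (Set.range v) =
      ⋃ i : Fin 4, convexHull ℝ ((Set.range v \ {v i}) ∪ {e}) := by
  classical
  have hrange : Set.range v = ↑(univ.image v) := by simp
  rw [hrange] at he ⊢
  rw [convexHull_eq_biUnion_convexHull_insert_erase _ (interior_subset he)]
  simp [Set.union_singleton]

/-- Definition 1.1 (refinement of a tetrahedron): the four subtetrahedra cover Δ.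
If `v : Fin 4 → ℝ³` is affinely independent and `e` lies in the interior of the
tetrahedron `Δ = convexHull ℝ (Set.range v)`, then `Δ` is the union of the four
subtetrahedra obtained by replacing one vertex `v i` with `e`. -/
theorem refinement_union
    (v : Fin 4 → EuclideanSpace ℝ (Fin 3)) (hv : AffineIndependent ℝ v)
    (e : EuclideanSpace ℝ (Fin 3))
    (he : e ∈ interior (convexHull ℝ (Set.range v))) :
    convexHull ℝ (Set.range v) =
      ⋃ i : Fin 4, convexHull ℝ ((Set.range v \ {v i}) ∪ {e}) :=
  refinement_union_general v e he
end

section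
/- Let v : Fin 4 → ℝ³ be an affinely independent family with Δ = convexHull ℝ (Set.range v), and let e be in the interior of Δ. Then the subtetrahedra Δᵢ = convexHull ℝ ((Set.range v \ {v i}) ∪ {e}) have pairwise disjoint topological interiors: for all i ≠ j in Fin 4, interior Δᵢ ∩ interior Δⱼ = ∅. -/
/-!
With `c = (c₀, …, c₃)` the (positive) barycentric coordinates of `e` and `λₖ` the barycentric
coordinate functions, the affine form `cᵢ λⱼ - cⱼ λᵢ` vanishes at `e`, is nonnegative at every
vertex of `Δᵢ` and nonpositive at every vertex of `Δⱼ`. Hence the hyperplane through `e` on which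
it vanishes separates `Δᵢ` from `Δⱼ`, and since a nonconstant affine form is an open map, the
interiors lie in the two open half-spaces.
-/

open Set

theorem disjoint_interior_of_nonneg_of_nonpos {E : Type*} [NormedAddCommGroup E]
    [NormedSpace ℝ E] [FiniteDimensional ℝ E] (f : E →ᵃ[ℝ] ℝ) (hf : f.linear ≠ 0)
    {s t : Set E} (hs : ∀ x ∈ s, 0 ≤ f x) (ht : ∀ x ∈ t, f x ≤ 0) :
    Disjoint (interior s) (interior t) := by
  have hopen : IsOpenMap f := AffineMap.isOpenMap_linear_iff.mp
    (f.linear.isOpenMap_of_finiteDimensional (LinearMap.surjective_of_ne_zero hf))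
  have hcont : Continuous f := f.continuous_of_finiteDimensional
  have hs' : interior s ⊆ f ⁻¹' Ioi 0 := by
    rw [← interior_Ici, hopen.preimage_interior_eq_interior_preimage hcont]
    exact interior_mono hs
  have ht' : interior t ⊆ f ⁻¹' Iio 0 := by
    rw [← interior_Iic, hopen.preimage_interior_eq_interior_preimage hcont]
    exact interior_mono ht
  exact (Ioi_disjoint_Iio_same.preimage f).mono hs' ht'

namespace AffineBasis

section SeparatingForm

variable {ι k E : Type*} [CommRing k] [AddCommGroup E] [Module k E]
  (b : AffineBasis ι k E) (e : E)

noncomputable def separatingForm (i j : ι) : E →ᵃ[k] k :=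
  b.coord i e • b.coord j - b.coord j e • b.coord i

theorem separatingForm_apply (i j : ι) (x : E) :
    b.separatingForm e i j x = b.coord i e * b.coord j x - b.coord j e * b.coord i x :=
  rfl

theorem separatingForm_apply_self (i j : ι) : b.separatingForm e i j e = 0 := by
  rw [separatingForm_apply, mul_comm, sub_self]

theorem separatingForm_swap (i j : ι) (x : E) :
    b.separatingForm e j i x = -b.separatingForm e i j x := by
  simp only [separatingForm_apply]
  ring

variable [LinearOrder k] [IsStrictOrderedRing k]

theorem separatingForm_nonneg_of_mem_convexHull {i : ι} (hi : 0 ≤ b.coord i e) (j : ι) {x : E}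
    (hx : x ∈ convexHull k ((range b \ {b i}) ∪ {e})) : 0 ≤ b.separatingForm e i j x := by
  refine convexHull_min ?_ ((convex_Ici 0).affine_preimage _) hx
  rintro y (⟨⟨l, rfl⟩, hl⟩ | rfl)
  · have hil : i ≠ l := fun h ↦ hl (h ▸ rfl)
    have hjl : 0 ≤ b.coord j (b l) := by
      rcases eq_or_ne j l with rfl | hjl
      · rw [coord_apply_eq]; exact zero_le_one
      · rw [coord_apply_ne _ hjl]
    simp only [mem_preimage, mem_Ici, separatingForm_apply, coord_apply_ne _ hil, mul_zero,
      sub_zero]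
    exact mul_nonneg hi hjl
  · exact (b.separatingForm_apply_self _ i j).ge

theorem separatingForm_linear_ne_zero {i j : ι} (hij : i ≠ j) (hi : 0 < b.coord i e)
    (hj : 0 < b.coord j e) : (b.separatingForm e i j).linear ≠ 0 := by
  intro h
  obtain ⟨q, hq⟩ := (b.separatingForm e i j).linear_eq_zero_iff_exists_const.mp h
  have hbi : b.separatingForm e i j (b i) = -b.coord j e := by
    rw [separatingForm_apply, coord_apply_ne _ hij.symm, coord_apply_eq]; ring
  have hbj : b.separatingForm e i j (b j) = b.coord i e := by
    rw [separatingForm_apply, coord_apply_ne _ hij, coord_apply_eq]; ring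
  rw [hq] at hbi hbj
  linarith [hbi.symm.trans hbj]

end SeparatingForm

theorem disjoint_interior_convexHull_diff_singleton_union {ι E : Type*} [Finite ι]
    [NormedAddCommGroup E] [NormedSpace ℝ E] (b : AffineBasis ι ℝ E) {e : E}
    (he : e ∈ interior (convexHull ℝ (range b))) {i j : ι} (hij : i ≠ j) :
    Disjoint (interior (convexHull ℝ ((range b \ {b i}) ∪ {e})))
      (interior (convexHull ℝ ((range b \ {b j}) ∪ {e}))) := by
  rw [b.interior_convexHull] at he
  have := b.finiteDimensional
  refine disjoint_interior_of_nonneg_of_nonpos (b.separatingForm e i j)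
    (b.separatingForm_linear_ne_zero e hij (he i) (he j))
    (fun x hx ↦ b.separatingForm_nonneg_of_mem_convexHull e (he i).le j hx) fun x hx ↦ ?_
  have := b.separatingForm_nonneg_of_mem_convexHull e (he j).le i hx
  rwa [separatingForm_swap, neg_nonneg] at this

end AffineBasis

/-- The four subtetrahedra of the refinement of Definition 1.1 have pairwise
disjoint topological interiors. -/
theorem refinement_interiors_disjoint
    (v : Fin 4 → EuclideanSpace ℝ (Fin 3)) (hv : AffineIndependent ℝ v)
    (e : EuclideanSpace ℝ (Fin 3))
    (he : e ∈ interior (convexHull ℝ (Set.range v))) :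
    ∀ i j : Fin 4, i ≠ j →
      interior (convexHull ℝ ((Set.range v \ {v i}) ∪ {e})) ∩
        interior (convexHull ℝ ((Set.range v \ {v j}) ∪ {e})) = ∅ := by
  intro i j hij
  have hspan : affineSpan ℝ (range v) = ⊤ := by
    rw [hv.affineSpan_eq_top_iff_card_eq_finrank_add_one]
    simp
  let b : AffineBasis (Fin 4) ℝ (EuclideanSpace ℝ (Fin 3)) := ⟨v, hv, hspan⟩
  exact disjoint_iff_inter_eq_empty.mp
    (b.disjoint_interior_convexHull_diff_singleton_union he hij)
end

section
/- Let v : Fin 4 → ℝ³ be an affinely independent family with Δ = convexHull ℝ (Set.range v), and let e be in the interior of Δ. Then for all i ≠ j in Fin 4, the two subtetrahedra intersect exactly in their common triangular face containing e: Δᵢ ∩ Δⱼ = convexHull ℝ ((Set.range v \ {v i, v j}) ∪ {e}). -/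
/-!
Let `w_k > 0` be the barycentric coordinates of `e` and `x_k` those of a point `x`. The affine
function `ψ x = w_j x_i - w_i x_j` is `≤ 0` at every vertex of `Δᵢ` and `≥ 0` at every vertex of
`Δⱼ`, hence vanishes on `Δᵢ ∩ Δⱼ`. Now `Δⱼ` is the join of `v i` with the common face `F`;
`ψ` vanishes on `F` but `ψ (v i) = w_j ≠ 0`, so the zero set of `ψ` in `Δⱼ` is `F`.
-/

open Set

theorem convexHull_insert_inter_eq_zero_subset {𝕜 E : Type*} [Field 𝕜] [LinearOrder 𝕜]
    [IsStrictOrderedRing 𝕜] [AddCommGroup E] [Module 𝕜 E] {s : Set E} {p : E}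
    (f : E →ᵃ[𝕜] 𝕜) (hs : ∀ x ∈ s, f x = 0) (hp : f p ≠ 0) :
    convexHull 𝕜 (insert p s) ∩ {x | f x = 0} ⊆ convexHull 𝕜 s := by
  rintro x ⟨hx, hfx⟩
  rcases s.eq_empty_or_nonempty with rfl | hne
  · rw [insert_empty_eq, convexHull_singleton, mem_singleton_iff] at hx
    exact absurd (hx ▸ hfx) hp
  rw [convexHull_insert hne, mem_convexJoin] at hx
  obtain ⟨_, rfl, y, hy, hxy⟩ := hx
  have hfy : f y = 0 := convexHull_min hs ((convex_singleton 0).affine_preimage f) hy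
  rw [segment_eq_image_lineMap] at hxy
  obtain ⟨t, -, rfl⟩ := hxy
  have ht : t = 1 := by
    rw [mem_ofPred_eq, AffineMap.apply_lineMap, hfy, AffineMap.lineMap_apply_ring'] at hfx
    exact mul_right_cancel₀ hp (by linear_combination -hfx)
  rwa [ht, AffineMap.lineMap_apply_one]

namespace AffineBasis

variable {ι 𝕜 E : Type*} [Field 𝕜] [AddCommGroup E] [Module 𝕜 E]
  (b : AffineBasis ι 𝕜 E) (e : E) (i j : ι)

noncomputable def crossCoord : E →ᵃ[𝕜] 𝕜 := b.coord j e • b.coord i - b.coord i e • b.coord j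

theorem crossCoord_apply (x : E) :
    b.crossCoord e i j x = b.coord j e * b.coord i x - b.coord i e * b.coord j x := rfl

theorem crossCoord_swap (x : E) : b.crossCoord e j i x = -b.crossCoord e i j x := by
  simp only [crossCoord_apply]; ring

theorem crossCoord_self : b.crossCoord e i j e = 0 := by
  rw [crossCoord_apply]; ring

variable {b e i j}

theorem crossCoord_apply_of_ne {k : ι} (hi : k ≠ i) (hj : k ≠ j) :
    b.crossCoord e i j (b k) = 0 := by
  rw [crossCoord_apply, b.coord_apply_ne hi.symm, b.coord_apply_ne hj.symm]; ring

variable [LinearOrder 𝕜] [IsStrictOrderedRing 𝕜]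

theorem convexHull_replace_subset_crossCoord_nonpos (hi : 0 ≤ b.coord i e) :
    convexHull 𝕜 ((range b \ {b i}) ∪ {e}) ⊆ {x | b.crossCoord e i j x ≤ 0} := by
  classical
  refine convexHull_min ?_ ((convex_Iic 0).affine_preimage _)
  rintro _ (⟨⟨k, rfl⟩, hk⟩ | rfl)
  · have hik : i ≠ k := fun h => hk (h ▸ rfl)
    rw [mem_ofPred_eq, crossCoord_apply, b.coord_apply_ne hik, b.coord_apply]
    split_ifs <;> simp [hi]
  · simp [crossCoord_self]

theorem convexHull_replace_inter_eq (hij : i ≠ j) (hi : 0 < b.coord i e)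
    (hj : 0 < b.coord j e) :
    convexHull 𝕜 ((range b \ {b i}) ∪ {e}) ∩ convexHull 𝕜 ((range b \ {b j}) ∪ {e}) =
      convexHull 𝕜 ((range b \ {b i, b j}) ∪ {e}) := by
  refine subset_antisymm ?_ (subset_inter ?_ ?_)
  · rintro x ⟨hxi, hxj⟩
    have hzero : b.crossCoord e i j x = 0 := by
      have h₁ : b.crossCoord e i j x ≤ 0 := convexHull_replace_subset_crossCoord_nonpos hi.le hxi
      have h₂ : b.crossCoord e j i x ≤ 0 := convexHull_replace_subset_crossCoord_nonpos hj.le hxj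
      rw [crossCoord_swap] at h₂
      linarith
    have hjoin : (range b \ {b j}) ∪ {e} = insert (b i) ((range b \ {b i, b j}) ∪ {e}) := by
      have hbi : b i ∈ range b \ {b j} := ⟨mem_range_self i, fun h => hij (b.ind.injective h)⟩
      rw [← insert_union, insert_sdiff_insert, insert_eq_of_mem hbi]
    refine convexHull_insert_inter_eq_zero_subset (b.crossCoord e i j) ?_ ?_ ⟨hjoin ▸ hxj, hzero⟩
    · rintro _ (⟨⟨k, rfl⟩, hk⟩ | rfl)
      · exact crossCoord_apply_of_ne (fun h => hk (by simp [h])) (fun h => hk (by simp [h]))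
      · exact crossCoord_self _ _ _ _
    · rw [crossCoord_apply, b.coord_apply_eq, b.coord_apply_ne hij.symm]
      simpa using hj.ne'
  all_goals
    refine convexHull_mono (union_subset_union_left _ (sdiff_subset_sdiff_right ?_))
    simp

end AffineBasis

/-- Two distinct subtetrahedra of the refinement of Definition 1.1 intersect
exactly in their common triangular face containing `e`. -/
theorem refinement_pairwise_intersection
    (v : Fin 4 → EuclideanSpace ℝ (Fin 3)) (hv : AffineIndependent ℝ v)
    (e : EuclideanSpace ℝ (Fin 3))
    (he : e ∈ interior (convexHull ℝ (Set.range v))) :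
    ∀ i j : Fin 4, i ≠ j →
      convexHull ℝ ((Set.range v \ {v i}) ∪ {e}) ∩
        convexHull ℝ ((Set.range v \ {v j}) ∪ {e}) =
      convexHull ℝ ((Set.range v \ {v i, v j}) ∪ {e}) := by
  intro i j hij
  let b : AffineBasis (Fin 4) ℝ (EuclideanSpace ℝ (Fin 3)) :=
    ⟨v, hv, hv.affineSpan_eq_top_iff_card_eq_finrank_add_one.mpr (by simp)⟩
  have hpos : ∀ k, 0 < b.coord k e := by
    rwa [show v = b from rfl, b.interior_convexHull] at he
  exact b.convexHull_replace_inter_eq hij (hpos i) (hpos j)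
end

section
/- Let v : Fin 4 → ℝ³ be an affinely independent family with Δ = convexHull ℝ (Set.range v), and let e be in the interior of Δ. Then for pairwise distinct i, j, k in Fin 4 with l the remaining fourth index, the three subtetrahedra Δᵢ, Δⱼ, Δₖ intersect exactly in the segment from v l to e: Δᵢ ∩ Δⱼ ∩ Δₖ = convexHull ℝ {v l, e} = segment ℝ (v l) e. -/
/-!
Let `λ` be the (positive) barycentric coordinates of `e`. On the simplex obtained by replacing
the vertex `v m` with `e`, the ratio `coord n x / λ n` is smallest at `n = m`: the corresponding
affine inequality holds at every vertex. So if `x` lies in all these simplices for `m ≠ l`, then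
`coord n x = c * λ n` for all `n ≠ l` with a common `c`, which lies in `[0, 1]`; comparing
coordinates gives `x = (1 - c) • v l + c • e`.
-/

open Set Function

theorem Function.Injective.range_update {ι α : Type*} [DecidableEq ι] {v : ι → α}
    (hv : Injective v) (m : ι) (e : α) :
    range (update v m e) = (range v \ {v m}) ∪ {e} := by
  ext x
  constructor
  · rintro ⟨n, rfl⟩
    rcases eq_or_ne n m with rfl | hn
    · simp
    · simp [hn, hv.ne hn]
  · rintro (⟨⟨n, rfl⟩, hn⟩ | rfl)
    · exact ⟨n, update_of_ne (by rintro rfl; exact hn rfl) _ _⟩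
    · exact ⟨m, update_self _ _ _⟩

theorem segment_subset_convexHull_range_update {ι 𝕜 E : Type*} [DecidableEq ι]
    [Field 𝕜] [LinearOrder 𝕜] [IsStrictOrderedRing 𝕜] [AddCommGroup E] [Module 𝕜 E]
    (v : ι → E) {l m : ι} (h : l ≠ m) (e : E) :
    segment 𝕜 (v l) e ⊆ convexHull 𝕜 (range (update v m e)) := by
  rw [← convexHull_pair]
  exact convexHull_mono (pair_subset ⟨l, update_of_ne h _ _⟩ ⟨m, update_self _ _ _⟩)

theorem convexHull_range_update_subset {ι 𝕜 E : Type*} [DecidableEq ι]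
    [Field 𝕜] [LinearOrder 𝕜] [IsStrictOrderedRing 𝕜] [AddCommGroup E] [Module 𝕜 E]
    (v : ι → E) (m : ι) {e : E} (he : e ∈ convexHull 𝕜 (range v)) :
    convexHull 𝕜 (range (update v m e)) ⊆ convexHull 𝕜 (range v) := by
  refine convexHull_min (range_subset_iff.2 fun n ↦ ?_) (convex_convexHull 𝕜 _)
  rcases eq_or_ne n m with rfl | hn
  · simpa using he
  · simpa [update_of_ne hn] using subset_convexHull 𝕜 _ (mem_range_self n)

namespace AffineBasis

variable {ι 𝕜 E : Type*} [Field 𝕜] [LinearOrder 𝕜] [IsStrictOrderedRing 𝕜]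
  [AddCommGroup E] [Module 𝕜 E] (b : AffineBasis ι 𝕜 E) {e x : E}

/-- The ratio `b.coord n x / b.coord n e` is smallest at `n = m`, stated without division. -/
theorem coord_mul_coord_le_of_mem_convexHull_update [DecidableEq ι] {m : ι}
    (hm : 0 ≤ b.coord m e) (hx : x ∈ convexHull 𝕜 (range (update b m e))) (n : ι) :
    b.coord n e * b.coord m x ≤ b.coord m e * b.coord n x := by
  let f : E →ᵃ[𝕜] 𝕜 := b.coord m e • b.coord n - b.coord n e • b.coord m
  suffices hf : convexHull 𝕜 (range (update b m e)) ⊆ f ⁻¹' Ici 0 by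
    simpa [f] using hf hx
  refine convexHull_min ?_ ((convex_Ici 0).affine_preimage f)
  rintro _ ⟨n', rfl⟩
  rcases eq_or_ne n' m with rfl | hn'
  · simp [f, mul_comm]
  · have : 0 ≤ b.coord n (b n') := by rw [b.coord_apply]; split_ifs <;> simp
    simpa [f, update_of_ne hn', b.coord_apply_ne hn'.symm] using mul_nonneg hm this

theorem mem_segment_of_forall_ne_mem_convexHull_update [Fintype ι] [DecidableEq ι] [Nontrivial ι]
    (he : ∀ n, 0 < b.coord n e) (l : ι)
    (hx : ∀ m ≠ l, x ∈ convexHull 𝕜 (range (update b m e))) :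
    x ∈ segment 𝕜 (b l) e := by
  obtain ⟨m₀, hm₀⟩ := exists_ne l
  have hcross := fun m hm ↦
    b.coord_mul_coord_le_of_mem_convexHull_update (he m).le (hx m hm)
  set c := b.coord m₀ x / b.coord m₀ e
  have hc_nonneg : 0 ≤ c := by
    have he_mem : e ∈ convexHull 𝕜 (range b) := by
      rw [b.convexHull_eq_nonneg_coord]; exact fun n ↦ (he n).le
    have hx_mem := convexHull_range_update_subset b m₀ he_mem (hx m₀ hm₀)
    rw [b.convexHull_eq_nonneg_coord] at hx_mem
    exact div_nonneg (hx_mem m₀) (he m₀).le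
  have hcoord_ne : ∀ n ≠ l, b.coord n x = c * b.coord n e := by
    intro n hn
    have h := le_antisymm (hcross n hn m₀) (hcross m₀ hm₀ n)
    rw [div_mul_eq_mul_div, eq_div_iff (he m₀).ne']
    linarith
  have hcoord_l : c * b.coord l e ≤ b.coord l x := by
    rw [div_mul_eq_mul_div, div_le_iff₀ (he m₀)]
    linarith [hcross m₀ hm₀ l]
  have hsum : b.coord l x = c * b.coord l e + (1 - c) := by
    have hx1 := b.sum_coord_apply_eq_one x
    have he1 := b.sum_coord_apply_eq_one e
    rw [← Finset.add_sum_erase _ _ (Finset.mem_univ l)] at hx1 he1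
    rw [Finset.sum_congr rfl fun n hn ↦ hcoord_ne n (Finset.ne_of_mem_erase hn),
      ← Finset.mul_sum] at hx1
    linear_combination hx1 - c * he1
  rw [segment_eq_image_lineMap]
  refine ⟨c, ⟨hc_nonneg, by linarith⟩, b.ext_elem fun n ↦ ?_⟩
  rw [AffineMap.apply_lineMap, AffineMap.lineMap_apply_ring']
  rcases eq_or_ne n l with rfl | hn
  · rw [b.coord_apply_eq, hsum]; ring
  · rw [b.coord_apply_ne hn, hcoord_ne n hn]; ring

end AffineBasis

/-- Three distinct subtetrahedra of the refinement of Definition 1.1 intersect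
exactly in the segment joining the remaining vertex `v l` to `e`. -/
theorem refinement_triple_intersection
    (v : Fin 4 → EuclideanSpace ℝ (Fin 3)) (hv : AffineIndependent ℝ v)
    (e : EuclideanSpace ℝ (Fin 3))
    (he : e ∈ interior (convexHull ℝ (Set.range v))) :
    ∀ i j k l : Fin 4, i ≠ j → i ≠ k → i ≠ l → j ≠ k → j ≠ l → k ≠ l →
      convexHull ℝ ((Set.range v \ {v i}) ∪ {e}) ∩
        convexHull ℝ ((Set.range v \ {v j}) ∪ {e}) ∩
        convexHull ℝ ((Set.range v \ {v k}) ∪ {e}) =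
        convexHull ℝ {v l, e} ∧
      convexHull ℝ ((Set.range v \ {v i}) ∪ {e}) ∩
        convexHull ℝ ((Set.range v \ {v j}) ∪ {e}) ∩
        convexHull ℝ ((Set.range v \ {v k}) ∪ {e}) =
        segment ℝ (v l) e := by
  intro i j k l hij hik hil hjk hjl hkl
  let b : AffineBasis (Fin 4) ℝ (EuclideanSpace ℝ (Fin 3)) :=
    ⟨v, hv, by simp [hv.affineSpan_eq_top_iff_card_eq_finrank_add_one]⟩
  have he_coord : ∀ n, 0 < b.coord n e := b.interior_convexHull.subset he
  have hsub : ∀ m ≠ l, segment ℝ (v l) e ⊆ convexHull ℝ (range (update v m e)) :=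
    fun m hm ↦ segment_subset_convexHull_range_update v hm.symm e
  have key : convexHull ℝ (range (update v i e)) ∩ convexHull ℝ (range (update v j e)) ∩
      convexHull ℝ (range (update v k e)) = segment ℝ (v l) e := by
    refine (subset_inter (subset_inter (hsub i hil) (hsub j hjl)) (hsub k hkl)).antisymm' ?_
    rintro x ⟨⟨hxi, hxj⟩, hxk⟩
    refine b.mem_segment_of_forall_ne_mem_convexHull_update he_coord l fun m hm ↦ ?_
    obtain rfl | rfl | rfl : m = i ∨ m = j ∨ m = k := by omega
    exacts [hxi, hxj, hxk]
  simp only [← hv.injective.range_update, key, convexHull_pair, and_self]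
end

section
/- Let v : Fin 4 → ℝ³ be an affinely independent family with Δ = convexHull ℝ (Set.range v), and let e be in the interior of Δ. Then the intersection of all four subtetrahedra of the refinement is exactly the singleton {e}: ⋂ i, Δᵢ = {e}. -/
/-!
Let `λ` denote barycentric coordinates with respect to the vertices of `Δ`. On the subtetrahedron
`Δᵢ`, the affine function `λᵢ(e) λⱼ - λⱼ(e) λᵢ` is nonnegative at every vertex, hence everywhere.
A point of all the `Δᵢ` therefore satisfies `λᵢ(x) λⱼ(e) = λⱼ(x) λᵢ(e)` for all `i, j`, so `λ(x)`
is proportional to `λ(e)`; as both sum to one, `x = e`.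
-/

open Set Function

section

variable {k E : Type*} [Field k] [LinearOrder k] [IsStrictOrderedRing k]
  [AddCommGroup E] [Module k E]

theorem AffineMap.nonneg_of_mem_convexHull {s : Set E} (φ : E →ᵃ[k] k)
    (hs : ∀ y ∈ s, 0 ≤ φ y) {x : E} (hx : x ∈ convexHull k s) : 0 ≤ φ x :=
  convexHull_min hs ((convex_Ici 0).affine_preimage φ) hx

variable {ι : Type*} [DecidableEq ι]

theorem AffineBasis.coord_mul_le_of_mem_convexHull_update (b : AffineBasis ι k E) {e x : E}
    {i : ι} (he : 0 ≤ b.coord i e) (hx : x ∈ convexHull k (range (update (⇑b) i e))) (j : ι) :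
    b.coord i x * b.coord j e ≤ b.coord j x * b.coord i e := by
  let φ : E →ᵃ[k] k := b.coord i e • b.coord j - b.coord j e • b.coord i
  suffices 0 ≤ φ x by simpa [φ, mul_comm, sub_nonneg] using this
  refine φ.nonneg_of_mem_convexHull ?_ hx
  rintro _ ⟨l, rfl⟩
  rcases eq_or_ne l i with rfl | hl
  · simp [φ, mul_comm]
  · have : 0 ≤ b.coord j (b l) := by
      rcases eq_or_ne j l with rfl | hjl
      · simp
      · simp [b.coord_apply_ne hjl]
    simpa [φ, hl, b.coord_apply_ne hl.symm] using mul_nonneg he this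

theorem AffineBasis.iInter_convexHull_update_eq_singleton [Fintype ι] (b : AffineBasis ι k E)
    {e : E} (he : ∀ i, 0 < b.coord i e) :
    ⋂ i, convexHull k (range (update (⇑b) i e)) = {e} := by
  refine Subset.antisymm (fun x hx => ?_) fun x hx => ?_
  · rw [mem_iInter] at hx
    have hcoord : ∀ i j, b.coord i x * b.coord j e = b.coord j x * b.coord i e := fun i j =>
      le_antisymm (b.coord_mul_le_of_mem_convexHull_update (he i).le (hx i) j)
        (b.coord_mul_le_of_mem_convexHull_update (he j).le (hx j) i)
    refine b.ext_elem fun i => ?_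
    simpa [← Finset.mul_sum, ← Finset.sum_mul, b.sum_coord_apply_eq_one] using
      Finset.sum_congr rfl fun j (_ : j ∈ Finset.univ) => hcoord i j
  · rw [mem_singleton_iff.mp hx, mem_iInter]
    exact fun i => subset_convexHull k _ ⟨i, update_self _ _ _⟩

end

theorem Function.Injective.range_update_s5 {α β : Type*} [DecidableEq α] {f : α → β}
    (hf : Injective f) (a : α) (b : β) : range (update f a b) = (range f \ {f a}) ∪ {b} := by
  ext y
  simp only [mem_union, mem_sdiff, mem_singleton_iff, mem_range]
  constructor
  · rintro ⟨c, rfl⟩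
    rcases eq_or_ne c a with rfl | hc
    · simp
    · simp [update_of_ne hc, hf.ne hc]
  · rintro (⟨⟨c, rfl⟩, hc⟩ | rfl)
    · exact ⟨c, update_of_ne (fun h => hc (congrArg f h)) _ _⟩
    · exact ⟨a, update_self _ _ _⟩

/-- The intersection of all four subtetrahedra of the refinement of
Definition 1.1 is exactly the singleton `{e}`. -/
theorem refinement_total_intersection
    (v : Fin 4 → EuclideanSpace ℝ (Fin 3)) (hv : AffineIndependent ℝ v)
    (e : EuclideanSpace ℝ (Fin 3))
    (he : e ∈ interior (convexHull ℝ (Set.range v))) :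
    ⋂ i : Fin 4, convexHull ℝ ((Set.range v \ {v i}) ∪ {e}) = {e} := by
  have hspan : affineSpan ℝ (Set.range v) = ⊤ :=
    hv.affineSpan_eq_top_iff_card_eq_finrank_add_one.mpr (by simp)
  let b : AffineBasis (Fin 4) ℝ (EuclideanSpace ℝ (Fin 3)) := ⟨v, hv, hspan⟩
  rw [show v = b from rfl, b.interior_convexHull] at he
  simp_rw [← hv.injective.range_update_s5]
  exact b.iInter_convexHull_update_eq_singleton he
end

section
/- Let v : Fin 4 → ℝ³ be an affinely independent family with Δ = convexHull ℝ (Set.range v), and let e be in the interior of Δ. Then for all i ≠ j in Fin 4, the subtetrahedron Δᵢ meets the face of Δ opposite the vertex v j exactly in their common edge: Δᵢ ∩ convexHull ℝ (Set.range v \ {v j}) = convexHull ℝ (Set.range v \ {v i, v j}). -/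
/-!
In barycentric coordinates `λ` of `Δ`, the face opposite `v j` is `{λ ≥ 0, λⱼ = 0}`, and `Δᵢ` lies
in the half-space `λⱼ(e) λᵢ ≤ λᵢ(e) λⱼ`, bounded by the plane through `e` and the edge opposite
`v i`, `v j`. As `λⱼ(e) > 0` for interior `e`, a common point has `λᵢ = λⱼ = 0`, so it lies on
that edge.
-/

open Set

namespace AffineBasis

variable {ι 𝕜 E : Type*} [Field 𝕜] [LinearOrder 𝕜] [IsStrictOrderedRing 𝕜]
  [AddCommGroup E] [Module 𝕜 E] (b : AffineBasis ι 𝕜 E)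

theorem convex_setOf_coord_nonneg_and_coord_eq_zero (s : Set ι) :
    Convex 𝕜 {x | (∀ k, 0 ≤ b.coord k x) ∧ ∀ k ∉ s, b.coord k x = 0} := by
  intro x hx y hy μ ν hμ hν hμν
  simp only [mem_ofPred_eq, Convex.combo_affine_apply hμν, smul_eq_mul]
  refine ⟨fun k => ?_, fun k hk => ?_⟩
  · have := hx.1 k; have := hy.1 k; positivity
  · rw [hx.2 k hk, hy.2 k hk]; ring

theorem convexHull_image_eq [Fintype ι] (s : Set ι) :
    convexHull 𝕜 (b '' s) = {x | (∀ k, 0 ≤ b.coord k x) ∧ ∀ k ∉ s, b.coord k x = 0} := by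
  classical
  refine (convexHull_min ?_ (b.convex_setOf_coord_nonneg_and_coord_eq_zero s)).antisymm ?_
  · rintro _ ⟨l, hl, rfl⟩
    refine ⟨fun k => ?_, fun k hk => b.coord_apply_ne (ne_of_mem_of_not_mem hl hk).symm⟩
    rw [b.coord_apply]
    split_ifs <;> norm_num
  · rintro x ⟨hx₀, hxs⟩
    have hx := (convex_convexHull 𝕜 (b '' s)).finsum_mem (w := fun k => b.coord k x) (z := b) hx₀
      (by rw [finsum_eq_sum_of_fintype, b.sum_coord_apply_eq_one])
      fun k hk => subset_convexHull 𝕜 _ (mem_image_of_mem b (not_imp_comm.1 (hxs k) hk))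
    rwa [finsum_eq_sum_of_fintype, b.linear_combination_coord_eq_self] at hx

theorem coord_mul_coord_le_of_mem_convexHull {i j : ι} {e x : E} (hei : 0 ≤ b.coord i e)
    (hx : x ∈ convexHull 𝕜 (b '' {i}ᶜ ∪ {e})) :
    b.coord j e * b.coord i x ≤ b.coord i e * b.coord j x := by
  classical
  let f : E →ᵃ[𝕜] 𝕜 := b.coord j e • b.coord i - b.coord i e • b.coord j
  suffices f x ≤ 0 by simpa [f] using this
  refine convexHull_min ?_ ((convex_Iic 0).affine_preimage f) hx
  rintro _ (⟨l, hl, rfl⟩ | rfl)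
  · have hj : 0 ≤ b.coord j (b l) := by rw [b.coord_apply]; split_ifs <;> norm_num
    simp only [f, AffineMap.coe_sub, AffineMap.coe_smul, mem_preimage, Pi.sub_apply,
      Pi.smul_apply, b.coord_apply_ne (Ne.symm hl), smul_eq_mul, mul_zero, zero_sub, mem_Iic,
      Left.neg_nonpos_iff]
    positivity
  · simp [f, mul_comm]

end AffineBasis

/-- A subtetrahedron `Δᵢ` of the refinement of Definition 1.1 meets the face of
`Δ` opposite the vertex `v j` (for `j ≠ i`) exactly in their common edge. -/
theorem refinement_meets_face
    (v : Fin 4 → EuclideanSpace ℝ (Fin 3)) (hv : AffineIndependent ℝ v)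
    (e : EuclideanSpace ℝ (Fin 3))
    (he : e ∈ interior (convexHull ℝ (Set.range v))) :
    ∀ i j : Fin 4, i ≠ j →
      convexHull ℝ ((Set.range v \ {v i}) ∪ {e}) ∩
        convexHull ℝ (Set.range v \ {v j}) =
      convexHull ℝ (Set.range v \ {v i, v j}) := by
  intro i j _
  let b : AffineBasis (Fin 4) ℝ (EuclideanSpace ℝ (Fin 3)) :=
    ⟨v, hv, by simp [hv.affineSpan_eq_top_iff_card_eq_finrank_add_one]⟩
  have hpos : e ∈ interior (convexHull ℝ (range b)) := he
  rw [b.interior_convexHull] at hpos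
  have hsdiff (s : Set (Fin 4)) : Set.range v \ v '' s = b '' sᶜ :=
    range_sdiff_image hv.injective s
  rw [← image_pair, ← image_singleton, ← image_singleton (a := j), hsdiff, hsdiff, hsdiff]
  refine Subset.antisymm ?_ (subset_inter (convexHull_mono ?_) (convexHull_mono ?_))
  · rintro x ⟨hx_sub, hx_face⟩
    rw [b.convexHull_image_eq] at hx_face ⊢
    obtain ⟨hx₀, hx_off⟩ := hx_face
    have hxj : b.coord j x = 0 := hx_off j (by simp)
    have hxi : b.coord i x = 0 := by
      have := b.coord_mul_coord_le_of_mem_convexHull (j := j) (hpos i).le hx_sub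
      rw [hxj, mul_zero] at this
      exact le_antisymm (nonpos_of_mul_nonpos_right this (hpos j)) (hx₀ i)
    refine ⟨hx₀, fun k hk => ?_⟩
    obtain rfl | rfl : k = i ∨ k = j := by simpa [or_iff_not_imp_left] using hk
    exacts [hxi, hxj]
  · exact (image_mono (by simp)).trans subset_union_left
  · exact image_mono (by simp)
end

section
/- Let p₀, p₁, p₂ ∈ ℝ² be affinely independent, vᵢ = (pᵢ, -1), wᵢ = (pᵢ, 1) in ℝ² × ℝ, and T = convexHull ℝ {p₀, p₁, p₂}. Then the prism T × [-1,1] (i.e., {(q,t) : q ∈ T, t ∈ Set.Icc (-1) 1}) equals the union of the three prism tetrahedra: T × [-1,1] = Δ₀ ∪ Δ₁ ∪ Δ₂. -/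
/-!
Write a point of the prism as `(a₀ • p₀ + a₁ • p₁ + a₂ • p₂, 1 - 2 * s)` with barycentric
weights `aᵢ` and `s ∈ [0, 1]`; as a convex combination of the six vertices it must put total
weight `s` on the bottom vertices `vᵢ = (pᵢ, -1)` and weight `aᵢ` on the fibre `{vᵢ, wᵢ}`.
Filling the bottom weight greedily into `v₀, v₁, v₂` in that order uses at most four vertices,
and which four is decided by where `s` falls among `0 ≤ a₀ ≤ a₀ + a₁ ≤ 1`: these are exactly
the tetrahedra `Δ₀, Δ₁, Δ₂`.
-/

open Set

section
variable {𝕜 E : Type*} [Field 𝕜] [LinearOrder 𝕜] [IsStrictOrderedRing 𝕜]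
  [AddCommGroup E] [Module 𝕜 E]

theorem exists_weights_of_mem_convexHull_triple {p₀ p₁ p₂ q : E}
    (hq : q ∈ convexHull 𝕜 {p₀, p₁, p₂}) :
    ∃ a₀ a₁ a₂ : 𝕜, 0 ≤ a₀ ∧ 0 ≤ a₁ ∧ 0 ≤ a₂ ∧ a₀ + a₁ + a₂ = 1 ∧
      a₀ • p₀ + a₁ • p₁ + a₂ • p₂ = q := by
  rw [convexHull_insert (insert_nonempty _ _), mem_convexJoin] at hq
  obtain ⟨_, rfl, z, hz, θ, μ, hθ, hμ, hθμ, rfl⟩ := hq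
  rw [convexHull_pair] at hz
  obtain ⟨b₁, b₂, hb₁, hb₂, hb, rfl⟩ := hz
  refine ⟨θ, μ * b₁, μ * b₂, hθ, mul_nonneg hμ hb₁, mul_nonneg hμ hb₂, ?_, ?_⟩
  · linear_combination μ * hb + hθμ
  · simp only [smul_add, smul_smul, add_assoc]

theorem add_smul_mem_convexHull_four {x₀ x₁ x₂ x₃ : E} {c₀ c₁ c₂ c₃ : 𝕜}
    (h₀ : 0 ≤ c₀) (h₁ : 0 ≤ c₁) (h₂ : 0 ≤ c₂) (h₃ : 0 ≤ c₃) (hc : c₀ + c₁ + c₂ + c₃ = 1) :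
    c₀ • x₀ + c₁ • x₁ + c₂ • x₂ + c₃ • x₃ ∈ convexHull 𝕜 {x₀, x₁, x₂, x₃} :=
  mem_convexHull_of_exists_fintype ![c₀, c₁, c₂, c₃] ![x₀, x₁, x₂, x₃]
    (fun i => by fin_cases i <;> assumption) (by simpa [Fin.sum_univ_four] using hc)
    (fun i => by fin_cases i <;> simp) (by simp [Fin.sum_univ_four])

variable {p₀ p₁ p₂ : E} {a₀ a₁ a₂ s : 𝕜}

theorem mk_mem_tetrahedron₀ (ha₁ : 0 ≤ a₁) (ha₂ : 0 ≤ a₂) (ha : a₀ + a₁ + a₂ = 1)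
    (hs : 0 ≤ s) (hs₀ : s ≤ a₀) :
    (a₀ • p₀ + a₁ • p₁ + a₂ • p₂, 1 - 2 * s) ∈
      convexHull 𝕜 {((p₀, -1) : E × 𝕜), (p₀, 1), (p₁, 1), (p₂, 1)} := by
  convert add_smul_mem_convexHull_four hs (sub_nonneg.2 hs₀) ha₁ ha₂ (by linear_combination ha)
    using 1
  refine Prod.ext ?_ ?_
  · simp only [Prod.fst_add, Prod.smul_fst]; module
  · simp only [Prod.snd_add, Prod.smul_snd, smul_eq_mul]; linear_combination -ha

theorem mk_mem_tetrahedron₁ (ha₀ : 0 ≤ a₀) (ha₂ : 0 ≤ a₂) (ha : a₀ + a₁ + a₂ = 1)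
    (hs₀ : a₀ ≤ s) (hs₁ : s ≤ a₀ + a₁) :
    (a₀ • p₀ + a₁ • p₁ + a₂ • p₂, 1 - 2 * s) ∈
      convexHull 𝕜 {((p₀, -1) : E × 𝕜), (p₁, -1), (p₁, 1), (p₂, 1)} := by
  convert add_smul_mem_convexHull_four ha₀ (sub_nonneg.2 hs₀) (sub_nonneg.2 hs₁) ha₂
    (by linear_combination ha) using 1
  refine Prod.ext ?_ ?_
  · simp only [Prod.fst_add, Prod.smul_fst]; module
  · simp only [Prod.snd_add, Prod.smul_snd, smul_eq_mul]; linear_combination -ha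

theorem mk_mem_tetrahedron₂ (ha₀ : 0 ≤ a₀) (ha₁ : 0 ≤ a₁) (ha : a₀ + a₁ + a₂ = 1)
    (hs₀ : a₀ + a₁ ≤ s) (hs₁ : s ≤ 1) :
    (a₀ • p₀ + a₁ • p₁ + a₂ • p₂, 1 - 2 * s) ∈
      convexHull 𝕜 {((p₀, -1) : E × 𝕜), (p₁, -1), (p₂, -1), (p₂, 1)} := by
  convert add_smul_mem_convexHull_four ha₀ ha₁ (sub_nonneg.2 hs₀) (sub_nonneg.2 hs₁)
    (by ring) using 1
  refine Prod.ext ?_ ?_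
  · simp only [Prod.fst_add, Prod.smul_fst]; linear_combination (norm := module) ha • p₂
  · simp only [Prod.snd_add, Prod.smul_snd, smul_eq_mul]; ring

theorem mk_mem_prismTetrahedra (ha₀ : 0 ≤ a₀) (ha₁ : 0 ≤ a₁) (ha₂ : 0 ≤ a₂)
    (ha : a₀ + a₁ + a₂ = 1) (hs₀ : 0 ≤ s) (hs₁ : s ≤ 1) :
    (a₀ • p₀ + a₁ • p₁ + a₂ • p₂, 1 - 2 * s) ∈
      convexHull 𝕜 {((p₀, -1) : E × 𝕜), (p₀, 1), (p₁, 1), (p₂, 1)} ∪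
      convexHull 𝕜 {((p₀, -1) : E × 𝕜), (p₁, -1), (p₁, 1), (p₂, 1)} ∪
      convexHull 𝕜 {((p₀, -1) : E × 𝕜), (p₁, -1), (p₂, -1), (p₂, 1)} := by
  rcases le_total s a₀ with hs | hs
  · exact .inl (.inl (mk_mem_tetrahedron₀ ha₁ ha₂ ha hs₀ hs))
  rcases le_total s (a₀ + a₁) with hs' | hs'
  · exact .inl (.inr (mk_mem_tetrahedron₁ ha₀ ha₂ ha hs hs'))
  · exact .inr (mk_mem_tetrahedron₂ ha₀ ha₁ ha hs' hs₁)

theorem prism_subset_tetrahedra (p₀ p₁ p₂ : E) :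
    convexHull 𝕜 {p₀, p₁, p₂} ×ˢ Icc (-1 : 𝕜) 1 ⊆
      convexHull 𝕜 {((p₀, -1) : E × 𝕜), (p₀, 1), (p₁, 1), (p₂, 1)} ∪
      convexHull 𝕜 {((p₀, -1) : E × 𝕜), (p₁, -1), (p₁, 1), (p₂, 1)} ∪
      convexHull 𝕜 {((p₀, -1) : E × 𝕜), (p₁, -1), (p₂, -1), (p₂, 1)} := by
  rintro ⟨q, t⟩ ⟨hq, ht₀, ht₁⟩
  obtain ⟨a₀, a₁, a₂, ha₀, ha₁, ha₂, ha, rfl⟩ := exists_weights_of_mem_convexHull_triple hq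
  rw [show t = 1 - 2 * ((1 - t) / 2) by ring]
  exact mk_mem_prismTetrahedra ha₀ ha₁ ha₂ ha (by linarith) (by linarith)

end

theorem prism_triangulation_union_general
    (p₀ p₁ p₂ : EuclideanSpace ℝ (Fin 2)) :
    (convexHull ℝ {p₀, p₁, p₂}) ×ˢ (Set.Icc (-1 : ℝ) 1) =
      convexHull ℝ {((p₀, -1) : EuclideanSpace ℝ (Fin 2) × ℝ),
          (p₀, 1), (p₁, 1), (p₂, 1)} ∪
      convexHull ℝ {((p₀, -1) : EuclideanSpace ℝ (Fin 2) × ℝ),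
          (p₁, -1), (p₁, 1), (p₂, 1)} ∪
      convexHull ℝ {((p₀, -1) : EuclideanSpace ℝ (Fin 2) × ℝ),
          (p₁, -1), (p₂, -1), (p₂, 1)} := by
  refine (prism_subset_tetrahedra p₀ p₁ p₂).antisymm
    (union_subset (union_subset ?_ ?_) ?_) <;>
  refine convexHull_min ?_ ((convex_convexHull ℝ _).prod (convex_Icc _ _)) <;>
  simpa [insert_subset_iff] using subset_convexHull ℝ {p₀, p₁, p₂}

/-- The prism `T × [-1,1]` over a nondegenerate triangle `T ⊆ ℝ²` is the union
of the three tetrahedra of the prism triangulation (Section 3 of the paper). -/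
theorem prism_triangulation_union
    (p₀ p₁ p₂ : EuclideanSpace ℝ (Fin 2))
    (hp : AffineIndependent ℝ ![p₀, p₁, p₂]) :
    (convexHull ℝ {p₀, p₁, p₂}) ×ˢ (Set.Icc (-1 : ℝ) 1) =
      convexHull ℝ {((p₀, -1) : EuclideanSpace ℝ (Fin 2) × ℝ),
          (p₀, 1), (p₁, 1), (p₂, 1)} ∪
      convexHull ℝ {((p₀, -1) : EuclideanSpace ℝ (Fin 2) × ℝ),
          (p₁, -1), (p₁, 1), (p₂, 1)} ∪
      convexHull ℝ {((p₀, -1) : EuclideanSpace ℝ (Fin 2) × ℝ),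
          (p₁, -1), (p₂, -1), (p₂, 1)} :=
  prism_triangulation_union_general p₀ p₁ p₂
end

section
/- Let p₀, p₁, p₂ ∈ ℝ² be affinely independent, vᵢ = (pᵢ, -1), wᵢ = (pᵢ, 1). Then the three tetrahedra Δ₀, Δ₁, Δ₂ of the prism triangulation have pairwise disjoint topological interiors: interior Δ₀ ∩ interior Δ₁ = ∅, interior Δ₁ ∩ interior Δ₂ = ∅, and interior Δ₀ ∩ interior Δ₂ = ∅. -/
/-!
Write `λ₀, λ₁, λ₂` for the barycentric coordinates on `T` and `t` for the height. Each pair of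
tetrahedra is separated by the graph of an affine function `h` of the base point: one tetrahedron
has all its vertices on or above the graph, the other on or below it, and the same then holds for
their convex hulls. The graphs are those of `1 - 2λ₀` (for `Δ₀, Δ₁`), `2λ₂ - 1` (for `Δ₁, Δ₂`) and
`λ₁ + 2λ₂ - 1` (for `Δ₀, Δ₂`). Two sets lying weakly on opposite sides of a graph have disjoint
interiors, since a graph has empty interior: each vertical line meets it in a single point.
-/

open Set

section Graph

variable {X : Type*} [TopologicalSpace X]

theorem interior_setOf_snd_eq_eq_empty (h : X → ℝ) :
    interior {p : X × ℝ | p.2 = h p.1} = ∅ := by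
  refine eq_empty_of_forall_notMem fun p hp => ?_
  have hslice : Continuous fun t : ℝ => (p.1, t) := by fun_prop
  have : p.2 ∈ interior {h p.1} := preimage_interior_subset_interior_preimage hslice hp
  simp [interior_singleton] at this

theorem interior_inter_interior_eq_empty_of_subset_epigraph_of_subset_hypograph (h : X → ℝ)
    {A B : Set (X × ℝ)} (hA : A ⊆ {p | h p.1 ≤ p.2}) (hB : B ⊆ {p | p.2 ≤ h p.1}) :
    interior A ∩ interior B = ∅ := by
  rw [← interior_inter, ← subset_empty_iff, ← interior_setOf_snd_eq_eq_empty h]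
  exact interior_mono fun p hp => le_antisymm (hB hp.2) (hA hp.1)

end Graph

section Affine

variable {E : Type*} [AddCommGroup E] [Module ℝ E]

theorem convexHull_subset_epigraph (h : E →ᵃ[ℝ] ℝ) {S : Set (E × ℝ)}
    (hS : ∀ p ∈ S, h p.1 ≤ p.2) : convexHull ℝ S ⊆ {p | h p.1 ≤ p.2} := by
  have hset : {p : E × ℝ | h p.1 ≤ p.2} =
      (AffineMap.snd - h.comp AffineMap.fst : E × ℝ →ᵃ[ℝ] ℝ) ⁻¹' Ici 0 := by
    ext p; simp
  exact convexHull_min hS (hset ▸ (convex_Ici 0).affine_preimage _)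

theorem convexHull_subset_hypograph (h : E →ᵃ[ℝ] ℝ) {S : Set (E × ℝ)}
    (hS : ∀ p ∈ S, p.2 ≤ h p.1) : convexHull ℝ S ⊆ {p | p.2 ≤ h p.1} := by
  have hset : {p : E × ℝ | p.2 ≤ h p.1} =
      (AffineMap.snd - h.comp AffineMap.fst : E × ℝ →ᵃ[ℝ] ℝ) ⁻¹' Iic 0 := by
    ext p; simp
  exact convexHull_min hS (hset ▸ (convex_Iic 0).affine_preimage _)

theorem interior_convexHull_inter_eq_empty_of_separated [TopologicalSpace E] (h : E →ᵃ[ℝ] ℝ)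
    {S S' : Set (E × ℝ)} (hS : ∀ p ∈ S, h p.1 ≤ p.2) (hS' : ∀ p ∈ S', p.2 ≤ h p.1) :
    interior (convexHull ℝ S) ∩ interior (convexHull ℝ S') = ∅ :=
  interior_inter_interior_eq_empty_of_subset_epigraph_of_subset_hypograph h
    (convexHull_subset_epigraph h hS) (convexHull_subset_hypograph h hS')

namespace AffineBasis

variable {ι : Type*} [Fintype ι]

noncomputable def interpolate (b : AffineBasis ι ℝ E) (c : ι → ℝ) : E →ᵃ[ℝ] ℝ :=
  (Fintype.linearCombination ℝ c).toAffineMap.comp b.coords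

@[simp]
theorem interpolate_apply_self (b : AffineBasis ι ℝ E) (c : ι → ℝ) (j : ι) :
    b.interpolate c (b j) = c j := by
  classical
  simp [interpolate, Fintype.linearCombination_apply, b.coords_apply, b.coord_apply]

end AffineBasis

theorem prism_triangulation_interiors_disjoint_of_affineBasis [TopologicalSpace E]
    (b : AffineBasis (Fin 3) ℝ E) :
    interior (convexHull ℝ {((b 0, -1) : E × ℝ), (b 0, 1), (b 1, 1), (b 2, 1)}) ∩
      interior (convexHull ℝ {((b 0, -1) : E × ℝ), (b 1, -1), (b 1, 1), (b 2, 1)}) = ∅ ∧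
    interior (convexHull ℝ {((b 0, -1) : E × ℝ), (b 1, -1), (b 1, 1), (b 2, 1)}) ∩
      interior (convexHull ℝ {((b 0, -1) : E × ℝ), (b 1, -1), (b 2, -1), (b 2, 1)}) = ∅ ∧
    interior (convexHull ℝ {((b 0, -1) : E × ℝ), (b 0, 1), (b 1, 1), (b 2, 1)}) ∩
      interior (convexHull ℝ {((b 0, -1) : E × ℝ), (b 1, -1), (b 2, -1), (b 2, 1)}) = ∅ := by
  refine ⟨?_, ?_, ?_⟩
  · refine interior_convexHull_inter_eq_empty_of_separated (b.interpolate ![-1, 1, 1]) ?_ ?_ <;>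
      norm_num [Matrix.cons_val_two]
  · refine interior_convexHull_inter_eq_empty_of_separated (b.interpolate ![-1, -1, 1]) ?_ ?_ <;>
      norm_num [Matrix.cons_val_two]
  · refine interior_convexHull_inter_eq_empty_of_separated (b.interpolate ![-1, 0, 1]) ?_ ?_ <;>
      norm_num [Matrix.cons_val_two]

end Affine

/-- The three tetrahedra `Δ₀, Δ₁, Δ₂` of the prism triangulation of
`T × [-1,1]` (Section 3 of the paper) have pairwise disjoint topological
interiors. -/
theorem prism_triangulation_interiors_disjoint
    (p₀ p₁ p₂ : EuclideanSpace ℝ (Fin 2))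
    (hp : AffineIndependent ℝ ![p₀, p₁, p₂]) :
    interior (convexHull ℝ {((p₀, -1) : EuclideanSpace ℝ (Fin 2) × ℝ),
        (p₀, 1), (p₁, 1), (p₂, 1)}) ∩
      interior (convexHull ℝ {((p₀, -1) : EuclideanSpace ℝ (Fin 2) × ℝ),
        (p₁, -1), (p₁, 1), (p₂, 1)}) = ∅ ∧
    interior (convexHull ℝ {((p₀, -1) : EuclideanSpace ℝ (Fin 2) × ℝ),
        (p₁, -1), (p₁, 1), (p₂, 1)}) ∩
      interior (convexHull ℝ {((p₀, -1) : EuclideanSpace ℝ (Fin 2) × ℝ),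
        (p₁, -1), (p₂, -1), (p₂, 1)}) = ∅ ∧
    interior (convexHull ℝ {((p₀, -1) : EuclideanSpace ℝ (Fin 2) × ℝ),
        (p₀, 1), (p₁, 1), (p₂, 1)}) ∩
      interior (convexHull ℝ {((p₀, -1) : EuclideanSpace ℝ (Fin 2) × ℝ),
        (p₁, -1), (p₂, -1), (p₂, 1)}) = ∅ := by
  have hspan : affineSpan ℝ (range ![p₀, p₁, p₂]) = ⊤ := by
    rw [hp.affineSpan_eq_top_iff_card_eq_finrank_add_one]
    simp
  exact prism_triangulation_interiors_disjoint_of_affineBasis ⟨![p₀, p₁, p₂], hp, hspan⟩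
end

section
/- Let p₀, p₁, p₂ ∈ ℝ² be affinely independent, vᵢ = (pᵢ, -1), wᵢ = (pᵢ, 1). Then the tetrahedra of the prism triangulation intersect exactly in common faces: Δ₀ ∩ Δ₁ = convexHull ℝ {v₀, w₁, w₂}, Δ₁ ∩ Δ₂ = convexHull ℝ {v₀, v₁, w₂}, and Δ₀ ∩ Δ₂ = convexHull ℝ {v₀, w₂} = segment ℝ v₀ w₂. -/
/-!
Three affinely independent points of the plane form an affine basis; write `λ` for the
barycentric coordinates of the base point and `t` for the height. The tetrahedra form the staircase
triangulation of the prism: `Δₖ` is spanned by the bottom vertices `vⱼ` with `j ≤ k` and the top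
vertices `wⱼ` with `j ≥ k`. For `k < l` the affine function `-∑_{j<l} λⱼ + ∑_{j≥l} λⱼ - t`
vanishes at `vⱼ` for `j < l` and at `wⱼ` for `j ≥ l`, is negative at the other top vertices and
positive at the other bottom vertices. So it is `≤ 0` on `Δₖ` and `≥ 0` on `Δₗ`, and `Δₖ ∩ Δₗ`
lies in the face of `Δₖ` where it vanishes: the hull of `vⱼ` (`j ≤ k`) and `wⱼ` (`j ≥ l`), which
lie in both tetrahedra.
-/

open Set

section Separation

variable {𝕜 F : Type*} [Field 𝕜] [LinearOrder 𝕜] [IsStrictOrderedRing 𝕜]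
  [AddCommGroup F] [Module 𝕜 F]

theorem convexHull_inter_subset_of_separating (φ : F →ᵃ[𝕜] 𝕜) {s t u : Set F}
    (hs : ∀ x ∈ s, φ x ≤ 0) (ht : ∀ x ∈ t, 0 ≤ φ x) (hu : ∀ x ∈ s, φ x = 0 → x ∈ u) :
    convexHull 𝕜 s ∩ convexHull 𝕜 t ⊆ convexHull 𝕜 u := by
  classical
  rintro x ⟨hxs, hxt⟩
  have hφx : 0 ≤ φ x := convexHull_min ht ((convex_Ici 0).affine_preimage φ) hxt
  rw [convexHull_eq] at hxs
  obtain ⟨ι, c, w, z, hw₀, hw₁, hz, rfl⟩ := hxs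
  have hφ : φ (c.centerMass w z) = ∑ i ∈ c, w i * φ (z i) := by
    rw [← affineCombination_eq_centerMass hw₁, c.map_affineCombination _ _ hw₁,
      c.affineCombination_eq_linear_combination _ _ hw₁]
    rfl
  have hterm_nonpos : ∀ i ∈ c, w i * φ (z i) ≤ 0 := fun i hi =>
    mul_nonpos_of_nonneg_of_nonpos (hw₀ i hi) (hs _ (hz i hi))
  have hterm_zero : ∀ i ∈ c, w i * φ (z i) = 0 :=
    (Finset.sum_eq_zero_iff_of_nonpos hterm_nonpos).1
      (le_antisymm (Finset.sum_nonpos hterm_nonpos) (hφ ▸ hφx))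
  rw [← Finset.centerMass_filter_ne_zero]
  refine Finset.centerMass_mem_convexHull _ (fun i hi => hw₀ i (Finset.mem_filter.1 hi).1)
    (by rw [Finset.sum_filter_ne_zero, hw₁]; exact one_pos) fun i hi => ?_
  obtain ⟨hic, hwi⟩ := Finset.mem_filter.1 hi
  exact hu _ (hz i hic) ((mul_eq_zero.1 (hterm_zero i hic)).resolve_left hwi)

end Separation

section Staircase

variable {ι 𝕜 E : Type*} [LinearOrder ι] [Field 𝕜] [AddCommGroup E] [Module 𝕜 E]
  (b : AffineBasis ι 𝕜 E)

/-- `convexHull 𝕜 (staircaseVertices b k k)` is the paper's `Δₖ`, and for `k < l` the hull of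
`staircaseVertices b k l` is the common face of `Δₖ` and `Δₗ`. -/
def staircaseVertices (k l : ι) : Set (E × 𝕜) :=
  (fun j => (b j, -1)) '' Iic k ∪ (fun j => (b j, 1)) '' Ici l

theorem staircaseVertices_mono {k k' l l' : ι} (hk : k ≤ k') (hl : l' ≤ l) :
    staircaseVertices b k l ⊆ staircaseVertices b k' l' :=
  union_subset_union (image_mono (Iic_subset_Iic.2 hk)) (image_mono (Ici_subset_Ici.2 hl))

variable [Fintype ι]

noncomputable def staircaseWall (l : ι) : E × 𝕜 →ᵃ[𝕜] 𝕜 :=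
  ∑ j, (if j < l then -1 else 1 : 𝕜) • (b.coord j).comp AffineMap.fst - AffineMap.snd

theorem staircaseWall_apply_vertex (l j : ι) (t : 𝕜) :
    staircaseWall b l (b j, t) = (if j < l then -1 else 1) - t := by
  classical
  have sum_apply (f : ι → E × 𝕜 →ᵃ[𝕜] 𝕜) (x : E × 𝕜) : (∑ j, f j) x = ∑ j, f j x :=
    map_sum (AddMonoidHom.mk' (fun g : E × 𝕜 →ᵃ[𝕜] 𝕜 => g x) fun _ _ => rfl) f _
  simp only [staircaseWall, AffineMap.coe_sub, AffineMap.coe_snd, Pi.sub_apply, sum_apply,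
    AffineMap.coe_smul, AffineMap.coe_comp, AffineMap.coe_fst, Pi.smul_apply, Function.comp_apply,
    b.coord_apply, smul_eq_mul, mul_ite, mul_one, mul_zero, Finset.sum_ite_eq', Finset.mem_univ,
    if_true]

variable [LinearOrder 𝕜] [IsStrictOrderedRing 𝕜] in
theorem convexHull_staircaseVertices_inter {k l : ι} (hkl : k < l) :
    convexHull 𝕜 (staircaseVertices b k k) ∩ convexHull 𝕜 (staircaseVertices b l l) =
      convexHull 𝕜 (staircaseVertices b k l) := by
  refine subset_antisymm (convexHull_inter_subset_of_separating (staircaseWall b l) ?_ ?_ ?_)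
    (subset_inter (convexHull_mono (staircaseVertices_mono b le_rfl hkl.le))
      (convexHull_mono (staircaseVertices_mono b hkl.le le_rfl)))
  · rintro _ (⟨j, hj, rfl⟩ | ⟨j, hj, rfl⟩) <;> dsimp only <;> rw [staircaseWall_apply_vertex]
    · rw [if_pos (hj.trans_lt hkl)]; norm_num
    · split_ifs <;> norm_num
  · rintro _ (⟨j, hj, rfl⟩ | ⟨j, hj, rfl⟩) <;> dsimp only <;> rw [staircaseWall_apply_vertex]
    · split_ifs <;> norm_num
    · rw [if_neg (not_lt.2 hj)]; norm_num
  · rintro _ (⟨j, hj, rfl⟩ | ⟨j, -, rfl⟩) hzero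
    · exact Or.inl ⟨j, hj, rfl⟩
    · rw [staircaseWall_apply_vertex] at hzero
      refine Or.inr ⟨j, not_lt.1 fun hjl => ?_, rfl⟩
      rw [if_pos hjl] at hzero
      norm_num at hzero

end Staircase

/-- The tetrahedra of the prism triangulation of `T × [-1,1]` (Section 3 of
the paper) intersect exactly in common faces: `Δ₀ ∩ Δ₁` is the triangle
`[v₀, w₁, w₂]`, `Δ₁ ∩ Δ₂` is the triangle `[v₀, v₁, w₂]`, and `Δ₀ ∩ Δ₂` is
the edge `[v₀, w₂]`. -/
theorem prism_triangulation_common_faces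
    (p₀ p₁ p₂ : EuclideanSpace ℝ (Fin 2))
    (hp : AffineIndependent ℝ ![p₀, p₁, p₂]) :
    convexHull ℝ {((p₀, -1) : EuclideanSpace ℝ (Fin 2) × ℝ),
        (p₀, 1), (p₁, 1), (p₂, 1)} ∩
      convexHull ℝ {((p₀, -1) : EuclideanSpace ℝ (Fin 2) × ℝ),
        (p₁, -1), (p₁, 1), (p₂, 1)} =
      convexHull ℝ {((p₀, -1) : EuclideanSpace ℝ (Fin 2) × ℝ), (p₁, 1), (p₂, 1)} ∧
    convexHull ℝ {((p₀, -1) : EuclideanSpace ℝ (Fin 2) × ℝ),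
        (p₁, -1), (p₁, 1), (p₂, 1)} ∩
      convexHull ℝ {((p₀, -1) : EuclideanSpace ℝ (Fin 2) × ℝ),
        (p₁, -1), (p₂, -1), (p₂, 1)} =
      convexHull ℝ {((p₀, -1) : EuclideanSpace ℝ (Fin 2) × ℝ), (p₁, -1), (p₂, 1)} ∧
    convexHull ℝ {((p₀, -1) : EuclideanSpace ℝ (Fin 2) × ℝ),
        (p₀, 1), (p₁, 1), (p₂, 1)} ∩
      convexHull ℝ {((p₀, -1) : EuclideanSpace ℝ (Fin 2) × ℝ),
        (p₁, -1), (p₂, -1), (p₂, 1)} =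
      convexHull ℝ {((p₀, -1) : EuclideanSpace ℝ (Fin 2) × ℝ), (p₂, 1)} ∧
    convexHull ℝ {((p₀, -1) : EuclideanSpace ℝ (Fin 2) × ℝ), (p₂, 1)} =
      segment ℝ ((p₀, -1) : EuclideanSpace ℝ (Fin 2) × ℝ) (p₂, 1) := by
  let b : AffineBasis (Fin 3) ℝ (EuclideanSpace ℝ (Fin 2)) :=
    ⟨![p₀, p₁, p₂], hp, hp.affineSpan_eq_top_iff_card_eq_finrank_add_one.2 (by simp)⟩
  have hb : ⇑b = ![p₀, p₁, p₂] := rfl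
  refine ⟨?_, ?_, ?_, convexHull_pair _ _⟩ <;>
  [convert convexHull_staircaseVertices_inter b (show (0 : Fin 3) < 1 by decide) using 3;
    convert convexHull_staircaseVertices_inter b (show (1 : Fin 3) < 2 by decide) using 3;
    convert convexHull_staircaseVertices_inter b (show (0 : Fin 3) < 2 by decide) using 3] <;>
  ext x <;> simp [staircaseVertices, hb, Fin.exists_fin_succ, eq_comm, or_assoc]
end

section
/- Let p₀, p₁, p₂, p₃ ∈ ℝ² with (p₀,p₁,p₂) affinely independent, (p₁,p₂,p₃) affinely independent, and convexHull ℝ {p₀,p₁,p₂} ∩ convexHull ℝ {p₁,p₂,p₃} = convexHull ℝ {p₁,p₂} (the two triangles T₁, T₂ meet exactly in the common edge). Set vᵢ = (pᵢ,-1), wᵢ = (pᵢ,1), and consider the six tetrahedra A₀ = conv{v₀,w₀,w₁,w₂}, A₁ = conv{v₀,v₁,w₁,w₂}, A₂ = conv{v₀,v₁,v₂,w₂} (the prism triangulation of T₁ × [-1,1]) and B₀ = conv{v₁,w₁,w₂,w₃}, B₁ = conv{v₁,v₂,w₂,w₃}, B₂ = conv{v₁,v₂,v₃,w₃} (the prism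 triangulation of T₂ × [-1,1]). Then the union of the six tetrahedra equals (T₁ ∪ T₂) × [-1,1], and the six tetrahedra have pairwise disjoint topological interiors. -/
/-!
Write a point of `T × [-1, 1]` as `(x, 1 - 2 s)` and let `λ₀, λ₁, λ₂` be the barycentric
coordinates of `x` in `T`. The three tetrahedra of the prism triangulation are the slabs
`0 ≤ s ≤ λ₀`, `λ₀ ≤ s ≤ λ₀ + λ₁` and `λ₀ + λ₁ ≤ s ≤ 1`, so they cover the prism, and any two of
them lie on opposite sides of one of the affine functions `1 - t - 2 λ₀` and
`1 - t - 2 (λ₀ + λ₁)`. A tetrahedron over `T₁` and one over `T₂` are separated by `λ₀ = 0`, the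
plane over the common edge: if `λ₀ p₃ > 0`, the points of the segment from the midpoint of the
edge to `p₃` close to the midpoint would lie in `T₁ ∩ T₂` but off the edge. Two sets on opposite
sides of a nonconstant affine function have disjoint interiors: the function vanishes on the
intersection of the interiors, and a nonempty open set spans the whole space.
-/

open Set Function

section FinAppend

variable {α : Type*} {m n : ℕ}

theorem Set.iUnion_fin_append (f : Fin m → Set α) (g : Fin n → Set α) :
    ⋃ i, Fin.append f g i = (⋃ i, f i) ∪ ⋃ j, g j := by
  ext x
  simp only [mem_iUnion, mem_union]
  constructor
  · rintro ⟨i, hi⟩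
    induction i using Fin.addCases with
    | left i => exact Or.inl ⟨i, by rwa [Fin.append_left] at hi⟩
    | right j => exact Or.inr ⟨j, by rwa [Fin.append_right] at hi⟩
  · rintro (⟨i, hi⟩ | ⟨j, hj⟩)
    · exact ⟨Fin.castAdd n i, by rwa [Fin.append_left]⟩
    · exact ⟨Fin.natAdd m j, by rwa [Fin.append_right]⟩

theorem Pairwise.fin_append {β : Type*} {r : β → β → Prop} (hr : ∀ ⦃x y⦄, r x y → r y x)
    {f : Fin m → β} {g : Fin n → β} (hf : Pairwise (r on f)) (hg : Pairwise (r on g))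
    (hfg : ∀ i j, r (f i) (g j)) : Pairwise (r on Fin.append f g) := by
  intro i j hij
  induction i using Fin.addCases <;> induction j using Fin.addCases <;>
    simp only [onFun, Fin.append_left, Fin.append_right] at hij ⊢
  · exact hf fun h => hij (congrArg _ h)
  · exact hfg _ _
  · exact hr (hfg _ _)
  · exact hg fun h => hij (congrArg _ h)

end FinAppend

section Separation

variable {W : Type*} [NormedAddCommGroup W] [NormedSpace ℝ W]

theorem disjoint_interior_of_subset_setOf_nonpos_of_subset_setOf_nonneg {f : W →ᵃ[ℝ] ℝ} {a b : W}
    (hab : f a ≠ f b) {S T : Set W} (hS : S ⊆ {x | f x ≤ 0}) (hT : T ⊆ {x | 0 ≤ f x}) :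
    Disjoint (interior S) (interior T) := by
  rw [Set.disjoint_iff_inter_eq_empty, ← Set.not_nonempty_iff_eq_empty]
  intro hne
  have hzero : f '' (interior S ∩ interior T) ⊆ {0} := by
    rintro _ ⟨x, ⟨hxS, hxT⟩, rfl⟩
    exact le_antisymm (hS (interior_subset hxS)) (hT (interior_subset hxT))
  have hf : ∀ x, f x = 0 := by
    intro x
    have hx : f x ∈ (affineSpan ℝ (interior S ∩ interior T)).map f := by
      rw [(isOpen_interior.inter isOpen_interior).affineSpan_eq_top hne]
      exact ⟨x, trivial, rfl⟩
    rw [AffineSubspace.map_span] at hx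
    simpa using affineSpan_mono ℝ hzero hx
  exact hab (by rw [hf a, hf b])

end Separation

section Prism

variable {V : Type*} [AddCommGroup V] [Module ℝ V]

theorem mem_convexHull_four_of_eq {x a b c d : V} {wa wb wc wd : ℝ} (ha : 0 ≤ wa) (hb : 0 ≤ wb)
    (hc : 0 ≤ wc) (hd : 0 ≤ wd) (hw : wa + wb + wc + wd = 1)
    (hx : x = wa • a + wb • b + wc • c + wd • d) : x ∈ convexHull ℝ {a, b, c, d} := by
  have := (convex_convexHull ℝ ({a, b, c, d} : Set V)).sum_mem (t := Finset.univ)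
    (w := ![wa, wb, wc, wd]) (z := ![a, b, c, d])
    (fun i _ => by fin_cases i <;> assumption) (by simp [Fin.sum_univ_four, hw])
    (fun i _ => subset_convexHull ℝ _ (by fin_cases i <;> simp))
  simpa [Fin.sum_univ_four, hx] using this

theorem exists_eq_add_smul_of_mem_convexHull_triple {q₀ q₁ q₂ x : V}
    (hx : x ∈ convexHull ℝ {q₀, q₁, q₂}) :
    ∃ l₀ l₁ l₂ : ℝ, 0 ≤ l₀ ∧ 0 ≤ l₁ ∧ 0 ≤ l₂ ∧ l₀ + l₁ + l₂ = 1 ∧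
      x = l₀ • q₀ + l₁ • q₁ + l₂ • q₂ := by
  rw [convexHull_insert (insert_nonempty _ _), convexHull_pair, convexJoin_singleton_left] at hx
  obtain ⟨y, ⟨c, d, hc, hd, hcd, rfl⟩, u, v, hu, hv, huv, rfl⟩ := mem_iUnion₂.1 hx
  exact ⟨u, v * c, v * d, hu, mul_nonneg hv hc, mul_nonneg hv hd,
    by linear_combination huv + v * hcd, by module⟩

def prismTetra (q₀ q₁ q₂ : V) : Fin 3 → Set (V × ℝ) :=
  ![convexHull ℝ {(q₀, -1), (q₀, 1), (q₁, 1), (q₂, 1)},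
    convexHull ℝ {(q₀, -1), (q₁, -1), (q₁, 1), (q₂, 1)},
    convexHull ℝ {(q₀, -1), (q₁, -1), (q₂, -1), (q₂, 1)}]

theorem mk_mem_iUnion_prismTetra {q₀ q₁ q₂ x : V} {l₀ l₁ l₂ t : ℝ} (h₀ : 0 ≤ l₀) (h₁ : 0 ≤ l₁)
    (h₂ : 0 ≤ l₂) (hl : l₀ + l₁ + l₂ = 1) (hx : x = l₀ • q₀ + l₁ • q₁ + l₂ • q₂)
    (ht : t ∈ Icc (-1) 1) : (x, t) ∈ ⋃ i, prismTetra q₀ q₁ q₂ i := by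
  obtain ⟨s, rfl⟩ : ∃ s, t = 1 - 2 * s := ⟨(1 - t) / 2, by ring⟩
  obtain ⟨hs₀, hs₁⟩ : 0 ≤ s ∧ s ≤ 1 := by constructor <;> linarith [ht.1, ht.2]
  rw [mem_iUnion]
  rcases le_or_gt s l₀ with hsl₀ | hsl₀
  · refine ⟨0, mem_convexHull_four_of_eq hs₀ (sub_nonneg.2 hsl₀) h₁ h₂ (by linarith) ?_⟩
    ext
    · simp only [hx, Prod.fst_add, Prod.smul_fst]; module
    · simp only [Prod.snd_add, Prod.smul_snd, smul_eq_mul]; linarith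
  rcases le_or_gt s (l₀ + l₁) with hsl₁ | hsl₁
  · refine ⟨1, mem_convexHull_four_of_eq (wb := s - l₀) h₀ (by linarith) (sub_nonneg.2 hsl₁) h₂
      (by linarith) ?_⟩
    ext
    · simp only [hx, Prod.fst_add, Prod.smul_fst]; module
    · simp only [Prod.snd_add, Prod.smul_snd, smul_eq_mul]; linarith
  · refine ⟨2, mem_convexHull_four_of_eq (wc := s - l₀ - l₁) (wd := 1 - s) h₀ h₁ (by linarith)
      (by linarith) (by ring) ?_⟩
    ext
    · simp only [hx, Prod.fst_add, Prod.smul_fst]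
      linear_combination (norm := module) hl • q₂
    · simp only [Prod.snd_add, Prod.smul_snd, smul_eq_mul]; linarith

theorem iUnion_prismTetra (q₀ q₁ q₂ : V) :
    ⋃ i, prismTetra q₀ q₁ q₂ i = convexHull ℝ {q₀, q₁, q₂} ×ˢ Icc (-1) 1 := by
  refine Subset.antisymm (iUnion_subset fun i => ?_) ?_
  · rw [← segment_eq_Icc (by norm_num), ← convexHull_pair, ← convexHull_prod]
    fin_cases i <;> exact convexHull_mono (by simp [insert_subset_iff])
  · rintro ⟨x, t⟩ ⟨hx, ht⟩
    obtain ⟨l₀, l₁, l₂, h₀, h₁, h₂, hl, rfl⟩ := exists_eq_add_smul_of_mem_convexHull_triple hx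
    exact mk_mem_iUnion_prismTetra h₀ h₁ h₂ hl rfl ht

theorem prismTetra_subset (q₀ q₁ q₂ : V) (i : Fin 3) :
    prismTetra q₀ q₁ q₂ i ⊆ convexHull ℝ {q₀, q₁, q₂} ×ˢ Icc (-1) 1 :=
  iUnion_prismTetra q₀ q₁ q₂ ▸ subset_iUnion _ i

def prismCut (φ : V →ᵃ[ℝ] ℝ) : V × ℝ →ᵃ[ℝ] ℝ :=
  AffineMap.const ℝ (V × ℝ) 1 - AffineMap.snd - (2 : ℝ) • φ.comp AffineMap.fst

@[simp]
theorem prismCut_apply (φ : V →ᵃ[ℝ] ℝ) (x : V) (t : ℝ) : prismCut φ (x, t) = 1 - t - 2 * φ x :=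
  rfl

end Prism

section Barycentric

open Filter Topology AffineMap

variable {E : Type*} [AddCommGroup E] [Module ℝ E]

theorem convexHull_subset_setOf_nonpos {f : E →ᵃ[ℝ] ℝ} {s : Set E} (h : ∀ x ∈ s, f x ≤ 0) :
    convexHull ℝ s ⊆ {x | f x ≤ 0} :=
  convexHull_min h ((convex_Iic 0).affine_preimage f)

theorem convexHull_subset_setOf_nonneg {f : E →ᵃ[ℝ] ℝ} {s : Set E} (h : ∀ x ∈ s, 0 ≤ f x) :
    convexHull ℝ s ⊆ {x | 0 ≤ f x} :=
  convexHull_min h ((convex_Ici 0).affine_preimage f)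

theorem AffineBasis.coord_nonpos_of_convexHull_inter_subset (b : AffineBasis (Fin 3) ℝ E) {p : E}
    (h : convexHull ℝ {b 0, b 1, b 2} ∩ convexHull ℝ {b 1, b 2, p} ⊆ convexHull ℝ {b 1, b 2}) :
    b.coord 0 p ≤ 0 := by
  by_contra! hp
  set m := midpoint ℝ (b 1) (b 2)
  have hcoord (i : Fin 3) (ε : ℝ) :
      b.coord i (lineMap m p ε) = lineMap (b.coord i m) (b.coord i p) ε :=
    apply_lineMap _ _ _ _
  have hm₁ : 0 < b.coord 1 m := by
    rw [map_midpoint, b.coord_apply_eq, b.coord_apply_ne (by decide)]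
    norm_num [midpoint_eq_smul_add]
  have hm₂ : 0 < b.coord 2 m := by
    rw [map_midpoint, b.coord_apply_eq, b.coord_apply_ne (by decide)]
    norm_num [midpoint_eq_smul_add]
  have hnear (i : Fin 3) (hi : 0 < b.coord i m) :
      ∀ᶠ ε in 𝓝[>] (0 : ℝ), 0 < b.coord i (lineMap m p ε) := by
    simp only [hcoord]
    exact nhdsWithin_le_nhds
      (lineMap_continuous.tendsto' 0 _ (lineMap_apply_zero _ _) |>.eventually (lt_mem_nhds hi))
  obtain ⟨ε, ⟨hε₀, hε₁⟩, h₁, h₂⟩ :=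
    (Eventually.and (Ioo_mem_nhdsGT zero_lt_one) ((hnear 1 hm₁).and (hnear 2 hm₂))).exists
  have hm₀ : b.coord 0 m = 0 := by
    rw [map_midpoint, b.coord_apply_ne (by decide), b.coord_apply_ne (by decide), midpoint_self]
  have hy₀ : 0 < b.coord 0 (lineMap m p ε) := by
    rw [hcoord, hm₀, lineMap_apply_ring]
    simpa using mul_pos hε₀ hp
  have hy₁ : lineMap m p ε ∈ convexHull ℝ {b 0, b 1, b 2} := by
    have hrange : ({b 0, b 1, b 2} : Set E) = range b := by
      simp [Set.ext_iff, Fin.exists_fin_succ, eq_comm]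
    rw [hrange, b.convexHull_eq_nonneg_coord]
    intro i
    fin_cases i
    exacts [hy₀.le, h₁.le, h₂.le]
  have hy₂ : lineMap m p ε ∈ convexHull ℝ {b 1, b 2, p} :=
    (convex_convexHull ℝ _).lineMap_mem
      (convexHull_mono (s := {b 1, b 2}) (by simp [insert_subset_iff])
        (by rw [convexHull_pair]; exact midpoint_mem_segment _ _))
      (subset_convexHull ℝ _ (by simp)) ⟨hε₀.le, hε₁.le⟩
  exact hy₀.not_ge <| convexHull_subset_setOf_nonpos (f := b.coord 0) (s := {b 1, b 2})
    (by simp) (h ⟨hy₁, hy₂⟩)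

end Barycentric

section PrismInteriors

variable {V : Type*} [NormedAddCommGroup V] [NormedSpace ℝ V]

theorem pairwise_disjoint_interior_prismTetra (b : AffineBasis (Fin 3) ℝ V) :
    Pairwise (Disjoint on fun i => interior (prismTetra (b 0) (b 1) (b 2) i)) := by
  have hsep (φ : V →ᵃ[ℝ] ℝ) {S T : Set (V × ℝ)} (hS : ∀ v ∈ S, prismCut φ v ≤ 0)
      (hT : ∀ v ∈ T, 0 ≤ prismCut φ v) :
      Disjoint (interior (convexHull ℝ S)) (interior (convexHull ℝ T)) :=
    disjoint_interior_of_subset_setOf_nonpos_of_subset_setOf_nonneg (a := (b 0, -1))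
      (b := (b 0, 1)) (by norm_num) (convexHull_subset_setOf_nonpos hS)
      (convexHull_subset_setOf_nonneg hT)
  have h₀₁ : Disjoint (interior (prismTetra (b 0) (b 1) (b 2) 0))
      (interior (prismTetra (b 0) (b 1) (b 2) 1)) :=
    hsep (b.coord 0) (by norm_num [b.coord_apply, Fin.ext_iff])
      (by norm_num [b.coord_apply, Fin.ext_iff])
  have h₀₂ : Disjoint (interior (prismTetra (b 0) (b 1) (b 2) 0))
      (interior (prismTetra (b 0) (b 1) (b 2) 2)) :=
    hsep (b.coord 0 + b.coord 1) (by norm_num [b.coord_apply, Fin.ext_iff])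
      (by norm_num [b.coord_apply, Fin.ext_iff])
  have h₁₂ : Disjoint (interior (prismTetra (b 0) (b 1) (b 2) 1))
      (interior (prismTetra (b 0) (b 1) (b 2) 2)) :=
    hsep (b.coord 0 + b.coord 1) (by norm_num [b.coord_apply, Fin.ext_iff])
      (by norm_num [b.coord_apply, Fin.ext_iff])
  intro i j hij
  fin_cases i <;> fin_cases j
  exacts [absurd rfl hij, h₀₁, h₀₂, h₀₁.symm, absurd rfl hij, h₁₂, h₀₂.symm, h₁₂.symm,
    absurd rfl hij]

theorem disjoint_interior_prismTetra_of_coord_nonpos (b : AffineBasis (Fin 3) ℝ V) {p : V}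
    (hp : b.coord 0 p ≤ 0) (i j : Fin 3) :
    Disjoint (interior (prismTetra (b 0) (b 1) (b 2) i))
      (interior (prismTetra (b 1) (b 2) p j)) := by
  let f : V × ℝ →ᵃ[ℝ] ℝ := (b.coord 0).comp AffineMap.fst
  have h₁ : prismTetra (b 0) (b 1) (b 2) i ⊆ {x | 0 ≤ f x} := fun x hx =>
    convexHull_subset_setOf_nonneg (f := b.coord 0) (by simp) (prismTetra_subset _ _ _ i hx).1
  have h₂ : prismTetra (b 1) (b 2) p j ⊆ {x | f x ≤ 0} := fun x hx =>
    convexHull_subset_setOf_nonpos (f := b.coord 0) (by simp [hp]) (prismTetra_subset _ _ _ j hx).1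
  exact (disjoint_interior_of_subset_setOf_nonpos_of_subset_setOf_nonneg (a := (b 1, 0))
    (b := (b 0, 0)) (by simp [f]) h₂ h₁).symm

end PrismInteriors

noncomputable def AffineIndependent.toAffineBasis {ι k V : Type*} [Fintype ι] [DivisionRing k]
    [AddCommGroup V] [Module k V] [FiniteDimensional k V] {v : ι → V} (hv : AffineIndependent k v)
    (hcard : Fintype.card ι = Module.finrank k V + 1) : AffineBasis ι k V :=
  ⟨v, hv, hv.affineSpan_eq_top_iff_card_eq_finrank_add_one.2 hcard⟩

/-- Lemma 3.1 of the paper: if two nondegenerate triangles `T₁ = [p₀,p₁,p₂]`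
and `T₂ = [p₁,p₂,p₃]` in `ℝ²` meet exactly in their common edge `[p₁,p₂]`
(oriented compatibly), then the union of the prism triangulations of
`T₁ × [-1,1]` and `T₂ × [-1,1]` is a triangulation of `(T₁ ∪ T₂) × [-1,1]`:
the six tetrahedra cover `(T₁ ∪ T₂) × [-1,1]` and have pairwise disjoint
topological interiors. -/
theorem prism_triangulations_glue
    (p₀ p₁ p₂ p₃ : EuclideanSpace ℝ (Fin 2))
    (h₁ : AffineIndependent ℝ ![p₀, p₁, p₂])
    (h₂ : AffineIndependent ℝ ![p₁, p₂, p₃])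
    (hedge : convexHull ℝ {p₀, p₁, p₂} ∩ convexHull ℝ {p₁, p₂, p₃} =
      convexHull ℝ {p₁, p₂}) :
    (⋃ i : Fin 6,
        (![convexHull ℝ {((p₀, -1) : EuclideanSpace ℝ (Fin 2) × ℝ),
              (p₀, 1), (p₁, 1), (p₂, 1)},
           convexHull ℝ {((p₀, -1) : EuclideanSpace ℝ (Fin 2) × ℝ),
              (p₁, -1), (p₁, 1), (p₂, 1)},
           convexHull ℝ {((p₀, -1) : EuclideanSpace ℝ (Fin 2) × ℝ),
              (p₁, -1), (p₂, -1), (p₂, 1)},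
           convexHull ℝ {((p₁, -1) : EuclideanSpace ℝ (Fin 2) × ℝ),
              (p₁, 1), (p₂, 1), (p₃, 1)},
           convexHull ℝ {((p₁, -1) : EuclideanSpace ℝ (Fin 2) × ℝ),
              (p₂, -1), (p₂, 1), (p₃, 1)},
           convexHull ℝ {((p₁, -1) : EuclideanSpace ℝ (Fin 2) × ℝ),
              (p₂, -1), (p₃, -1), (p₃, 1)}] : Fin 6 → Set (EuclideanSpace ℝ (Fin 2) × ℝ)) i) =
      (convexHull ℝ {p₀, p₁, p₂} ∪ convexHull ℝ {p₁, p₂, p₃}) ×ˢ (Set.Icc (-1 : ℝ) 1) ∧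
    (∀ i j : Fin 6, i ≠ j →
      interior ((![convexHull ℝ {((p₀, -1) : EuclideanSpace ℝ (Fin 2) × ℝ),
              (p₀, 1), (p₁, 1), (p₂, 1)},
           convexHull ℝ {((p₀, -1) : EuclideanSpace ℝ (Fin 2) × ℝ),
              (p₁, -1), (p₁, 1), (p₂, 1)},
           convexHull ℝ {((p₀, -1) : EuclideanSpace ℝ (Fin 2) × ℝ),
              (p₁, -1), (p₂, -1), (p₂, 1)},
           convexHull ℝ {((p₁, -1) : EuclideanSpace ℝ (Fin 2) × ℝ),
              (p₁, 1), (p₂, 1), (p₃, 1)},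
           convexHull ℝ {((p₁, -1) : EuclideanSpace ℝ (Fin 2) × ℝ),
              (p₂, -1), (p₂, 1), (p₃, 1)},
           convexHull ℝ {((p₁, -1) : EuclideanSpace ℝ (Fin 2) × ℝ),
              (p₂, -1), (p₃, -1), (p₃, 1)}] : Fin 6 → Set (EuclideanSpace ℝ (Fin 2) × ℝ)) i) ∩
      interior ((![convexHull ℝ {((p₀, -1) : EuclideanSpace ℝ (Fin 2) × ℝ),
              (p₀, 1), (p₁, 1), (p₂, 1)},
           convexHull ℝ {((p₀, -1) : EuclideanSpace ℝ (Fin 2) × ℝ),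
              (p₁, -1), (p₁, 1), (p₂, 1)},
           convexHull ℝ {((p₀, -1) : EuclideanSpace ℝ (Fin 2) × ℝ),
              (p₁, -1), (p₂, -1), (p₂, 1)},
           convexHull ℝ {((p₁, -1) : EuclideanSpace ℝ (Fin 2) × ℝ),
              (p₁, 1), (p₂, 1), (p₃, 1)},
           convexHull ℝ {((p₁, -1) : EuclideanSpace ℝ (Fin 2) × ℝ),
              (p₂, -1), (p₂, 1), (p₃, 1)},
           convexHull ℝ {((p₁, -1) : EuclideanSpace ℝ (Fin 2) × ℝ),
              (p₂, -1), (p₃, -1), (p₃, 1)}] : Fin 6 → Set (EuclideanSpace ℝ (Fin 2) × ℝ)) j) = ∅) := by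
  suffices h : ∀ F : Fin 6 → Set (EuclideanSpace ℝ (Fin 2) × ℝ),
      F = Fin.append (prismTetra p₀ p₁ p₂) (prismTetra p₁ p₂ p₃) →
      (⋃ i, F i) = (convexHull ℝ {p₀, p₁, p₂} ∪ convexHull ℝ {p₁, p₂, p₃}) ×ˢ Icc (-1) 1 ∧
        ∀ i j, i ≠ j → interior (F i) ∩ interior (F j) = ∅ from
    h _ (funext fun i => by fin_cases i <;> rfl)
  rintro _ rfl
  have hcard : Fintype.card (Fin 3) = Module.finrank ℝ (EuclideanSpace ℝ (Fin 2)) + 1 := by simp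
  let b₁ := h₁.toAffineBasis hcard
  let b₂ := h₂.toAffineBasis hcard
  have hdisj := Pairwise.fin_append (r := fun A B => Disjoint (interior A) (interior B))
    (fun _ _ h => h.symm) (pairwise_disjoint_interior_prismTetra b₁)
    (pairwise_disjoint_interior_prismTetra b₂)
    (disjoint_interior_prismTetra_of_coord_nonpos b₁
      (b₁.coord_nonpos_of_convexHull_inter_subset hedge.subset))
  refine ⟨?_, fun i j hij => disjoint_iff_inter_eq_empty.1 (hdisj hij)⟩
  rw [iUnion_fin_append (prismTetra p₀ p₁ p₂) (prismTetra p₁ p₂ p₃), iUnion_prismTetra,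
    iUnion_prismTetra, union_prod]
end

section
/- Let p₀, p₁, p₂ ∈ ℝ² be affinely independent, vᵢ = (pᵢ, -1), wᵢ = (pᵢ, 1). Let S′ = convexHull ℝ {v₀, v₁, w₀, w₁} be the boundary square of the prism lying over the edge from p₀ to p₁. Then Δ₀ ∩ S′ = convexHull ℝ {v₀, w₀, w₁}, Δ₁ ∩ S′ = convexHull ℝ {v₀, v₁, w₁}, and Δ₂ ∩ S′ = segment ℝ v₀ v₁; i.e., the prism triangulation divides this boundary square along the diagonal from v₀ to w₁ (from (start,-1) to (end,1) of the oriented edge). -/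
/-!
Let `ℓ` be the barycentric coordinate of `p₂` with respect to the triangle `p₀p₁p₂`, and
`g = ℓ ∘ Prod.fst`. Then `g` is an affine functional on `ℝ² × ℝ` that is nonnegative on all
vertices of the prism, vanishes on the boundary square `S′` and equals `1` at `v₂` and `w₂`.
Hence `{g = 0}` is a supporting hyperplane, and each `Δᵢ ∩ S′` is the convex hull of those
vertices of `Δᵢ` on which `g` vanishes.
-/

open Set

section SupportingHyperplane

variable {𝕜 E : Type*} [Field 𝕜] [LinearOrder 𝕜] [IsStrictOrderedRing 𝕜]
  [AddCommGroup E] [Module 𝕜 E]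

theorem convexHull_inter_preimage_zero_subset {s : Set E} {g : E →ᵃ[𝕜] 𝕜}
    (hg : ∀ x ∈ s, 0 ≤ g x) :
    convexHull 𝕜 s ∩ g ⁻¹' {0} ⊆ convexHull 𝕜 (s ∩ g ⁻¹' {0}) := by
  let C := {x | 0 ≤ g x ∧ (g x = 0 → x ∈ convexHull 𝕜 (s ∩ g ⁻¹' {0}))}
  have hsC : s ⊆ C := fun x hx => ⟨hg x hx, fun h => subset_convexHull 𝕜 _ ⟨hx, h⟩⟩
  have hC : Convex 𝕜 C := by
    rintro x ⟨hx₀, hx⟩ y ⟨hy₀, hy⟩ a b ha hb hab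
    have hcombo : g (a • x + b • y) = a * g x + b * g y := Convex.combo_affine_apply hab
    refine ⟨by rw [hcombo]; positivity, fun h₀ => ?_⟩
    obtain ⟨hax, hby⟩ := (add_eq_zero_iff_of_nonneg (mul_nonneg ha hx₀)
      (mul_nonneg hb hy₀)).1 (hcombo ▸ h₀)
    rcases mul_eq_zero.1 hax with rfl | hgx
    · obtain rfl : b = 1 := by simpa using hab
      simpa using hy (by simpa using hby)
    rcases mul_eq_zero.1 hby with rfl | hgy
    · obtain rfl : a = 1 := by simpa using hab
      simpa using hx hgx
    exact convex_convexHull 𝕜 _ (hx hgx) (hy hgy) ha hb hab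
  rintro x ⟨hx, hgx⟩
  exact (convexHull_min hsC hC hx).2 hgx

theorem convexHull_inter_convexHull_eq_of_supporting {s t u : Set E} (g : E →ᵃ[𝕜] 𝕜)
    (hs : ∀ x ∈ s, 0 ≤ g x) (ht : ∀ x ∈ t, g x = 0) (hsu : ∀ x ∈ s, g x = 0 → x ∈ u)
    (hus : u ⊆ s) (hut : u ⊆ t) :
    convexHull 𝕜 s ∩ convexHull 𝕜 t = convexHull 𝕜 u := by
  refine (subset_inter (convexHull_mono hus) (convexHull_mono hut)).antisymm' ?_
  rintro x ⟨hxs, hxt⟩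
  have hzero : convexHull 𝕜 t ⊆ g ⁻¹' {0} :=
    convexHull_min ht ((convex_singleton 0).affine_preimage g)
  exact convexHull_mono (fun y hy => hsu y hy.1 hy.2)
    (convexHull_inter_preimage_zero_subset hs ⟨hxs, hzero hxt⟩)

end SupportingHyperplane

theorem AffineIndependent.exists_affineMap_eq_zero_eq_zero_eq_one {k V : Type*} [Field k]
    [AddCommGroup V] [Module k V] [FiniteDimensional k V] (hV : Module.finrank k V = 2)
    {p₀ p₁ p₂ : V} (hp : AffineIndependent k ![p₀, p₁, p₂]) :
    ∃ g : V →ᵃ[k] k, g p₀ = 0 ∧ g p₁ = 0 ∧ g p₂ = 1 := by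
  have htot : affineSpan k (range ![p₀, p₁, p₂]) = ⊤ :=
    hp.affineSpan_eq_top_iff_card_eq_finrank_add_one.2 (by simp [hV])
  let b : AffineBasis (Fin 3) k V := ⟨_, hp, htot⟩
  exact ⟨b.coord 2, b.coord_apply_ne (i := 2) (j := 0) (by decide),
    b.coord_apply_ne (i := 2) (j := 1) (by decide), b.coord_apply_eq 2⟩

/-- The prism triangulation of `T × [-1,1]` (Section 3 of the paper) divides
the boundary square over the oriented edge `p₀p₁` along the diagonal from
`v₀ = (p₀,-1)` to `w₁ = (p₁,1)`: `Δ₀` meets it in the triangle `[v₀,w₀,w₁]`,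
`Δ₁` in the triangle `[v₀,v₁,w₁]`, and `Δ₂` in the edge `[v₀,v₁]`. -/
theorem prism_triangulation_boundary_square
    (p₀ p₁ p₂ : EuclideanSpace ℝ (Fin 2))
    (hp : AffineIndependent ℝ ![p₀, p₁, p₂]) :
    convexHull ℝ {((p₀, -1) : EuclideanSpace ℝ (Fin 2) × ℝ),
        (p₀, 1), (p₁, 1), (p₂, 1)} ∩
      convexHull ℝ {((p₀, -1) : EuclideanSpace ℝ (Fin 2) × ℝ),
        (p₁, -1), (p₀, 1), (p₁, 1)} =
      convexHull ℝ {((p₀, -1) : EuclideanSpace ℝ (Fin 2) × ℝ), (p₀, 1), (p₁, 1)} ∧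
    convexHull ℝ {((p₀, -1) : EuclideanSpace ℝ (Fin 2) × ℝ),
        (p₁, -1), (p₁, 1), (p₂, 1)} ∩
      convexHull ℝ {((p₀, -1) : EuclideanSpace ℝ (Fin 2) × ℝ),
        (p₁, -1), (p₀, 1), (p₁, 1)} =
      convexHull ℝ {((p₀, -1) : EuclideanSpace ℝ (Fin 2) × ℝ), (p₁, -1), (p₁, 1)} ∧
    convexHull ℝ {((p₀, -1) : EuclideanSpace ℝ (Fin 2) × ℝ),
        (p₁, -1), (p₂, -1), (p₂, 1)} ∩
      convexHull ℝ {((p₀, -1) : EuclideanSpace ℝ (Fin 2) × ℝ),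
        (p₁, -1), (p₀, 1), (p₁, 1)} =
      segment ℝ ((p₀, -1) : EuclideanSpace ℝ (Fin 2) × ℝ) (p₁, -1) := by
  obtain ⟨ℓ, h₀, h₁, h₂⟩ := hp.exists_affineMap_eq_zero_eq_zero_eq_one finrank_euclideanSpace_fin
  let g := ℓ.comp (AffineMap.fst : EuclideanSpace ℝ (Fin 2) × ℝ →ᵃ[ℝ] _)
  rw [← convexHull_pair]
  refine ⟨?_, ?_, ?_⟩ <;> apply convexHull_inter_convexHull_eq_of_supporting g <;>
    simp [g, h₀, h₁, h₂, insert_subset_iff]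
end

section
/- Let p₀, p₁, p₂ ∈ ℝ² be affinely independent, vᵢ = (pᵢ, -1), wᵢ = (pᵢ, 1). Then the middle slice of the prism triangulation meets the two outer tetrahedra in triangles: Δ₀ ∩ (ℝ² × {0}) = convexHull ℝ {(p₀,0), ((p₀+p₁)/2, 0), ((p₀+p₂)/2, 0)} and Δ₂ ∩ (ℝ² × {0}) = convexHull ℝ {((p₀+p₂)/2, 0), ((p₁+p₂)/2, 0), (p₂, 0)}; these are the normal triangles in which the middle surface T × {0} meets Δ₀ (linking vertex v₀) and Δ₂ (linking vertex w₂). -/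
/-!
Each outer tetrahedron is a cone over a triangle at height `c = ±1` with its apex at height `-c`.
Every point of such a cone lies on a segment from the apex to a point of the base, and that
segment crosses height `0` exactly at its midpoint. Hence the slice is the image of the base
under the homothety of ratio `1/2` centred at the apex, and an affine map commutes with taking
convex hulls.
-/

open Set

section Slice

variable {𝕜 E : Type*} [Field 𝕜] [LinearOrder 𝕜] [IsStrictOrderedRing 𝕜]
  [AddCommGroup E] [Module 𝕜 E]

lemma midpoint_prod_of_add_eq_zero {x y : E} {s t : 𝕜} (h : s + t = 0) :
    midpoint 𝕜 (x, s) (y, t) = (midpoint 𝕜 x y, 0) := by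
  refine Prod.ext rfl ?_
  change midpoint 𝕜 s t = 0
  rw [midpoint_eq_smul_add, h, smul_zero]

lemma segment_inter_snd_preimage_zero {a y : E × 𝕜} {c : 𝕜} (hc : c ≠ 0) (ha : a.2 = -c)
    (hy : y.2 = c) :
    segment 𝕜 a y ∩ Prod.snd ⁻¹' {0} = {midpoint 𝕜 a y} := by
  ext x
  simp only [mem_inter_iff, mem_preimage, mem_singleton_iff]
  constructor
  · rintro ⟨⟨u, v, -, -, huv, rfl⟩, hx⟩
    have hvu : v - u = 0 := by
      refine (mul_eq_zero.1 ?_).resolve_right hc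
      simp only [Prod.snd_add, Prod.smul_snd, smul_eq_mul, ha, hy] at hx
      linear_combination hx
    have hu : u = ⅟2 := by rw [invOf_eq_inv]; linear_combination (huv - hvu) / 2
    have hv : v = ⅟2 := by rw [invOf_eq_inv]; linear_combination (huv + hvu) / 2
    rw [midpoint_eq_smul_add, hu, hv, smul_add]
  · rintro rfl
    refine ⟨midpoint_mem_segment a y, ?_⟩
    change midpoint 𝕜 a.2 y.2 = 0
    rw [midpoint_eq_smul_add, ha, hy, neg_add_cancel, smul_zero]

lemma convexHull_insert_inter_snd_preimage_zero {a : E × 𝕜} {s : Set (E × 𝕜)} {c : 𝕜}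
    (hs : s.Nonempty) (hc : c ≠ 0) (ha : a.2 = -c) (hsc : ∀ y ∈ s, y.2 = c) :
    convexHull 𝕜 (insert a s) ∩ Prod.snd ⁻¹' {0} = convexHull 𝕜 (midpoint 𝕜 a '' s) := by
  have hull_snd : ∀ y ∈ convexHull 𝕜 s, y.2 = c :=
    convexHull_min hsc (convex_hyperplane (LinearMap.snd 𝕜 E 𝕜).isLinear c)
  rw [convexHull_insert hs, convexJoin_singleton_left, iUnion₂_inter]
  calc ⋃ y ∈ convexHull 𝕜 s, segment 𝕜 a y ∩ Prod.snd ⁻¹' {0}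
      = ⋃ y ∈ convexHull 𝕜 s, {midpoint 𝕜 a y} :=
        iUnion₂_congr fun y hy => segment_inter_snd_preimage_zero hc ha (hull_snd y hy)
    _ = AffineMap.homothety a (⅟2 : 𝕜) '' convexHull 𝕜 s := (image_eq_iUnion _ _).symm
    _ = convexHull 𝕜 (midpoint 𝕜 a '' s) := AffineMap.image_convexHull _ s

end Slice

theorem prism_middle_slice_triangles_general
    (p₀ p₁ p₂ : EuclideanSpace ℝ (Fin 2)) :
    convexHull ℝ {((p₀, -1) : EuclideanSpace ℝ (Fin 2) × ℝ),
        (p₀, 1), (p₁, 1), (p₂, 1)} ∩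
      (Set.univ ×ˢ ({0} : Set ℝ)) =
      convexHull ℝ {((p₀, 0) : EuclideanSpace ℝ (Fin 2) × ℝ),
        (midpoint ℝ p₀ p₁, 0), (midpoint ℝ p₀ p₂, 0)} ∧
    convexHull ℝ {((p₀, -1) : EuclideanSpace ℝ (Fin 2) × ℝ),
        (p₁, -1), (p₂, -1), (p₂, 1)} ∩
      (Set.univ ×ˢ ({0} : Set ℝ)) =
      convexHull ℝ {((midpoint ℝ p₀ p₂, 0) : EuclideanSpace ℝ (Fin 2) × ℝ),
        (midpoint ℝ p₁ p₂, 0), (p₂, 0)} := by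
  rw [univ_prod]
  constructor
  · rw [convexHull_insert_inter_snd_preimage_zero (c := 1) (by simp) one_ne_zero rfl
      (by rintro y (rfl | rfl | rfl) <;> rfl)]
    simp only [image_insert_eq, image_singleton,
      midpoint_prod_of_add_eq_zero (neg_add_cancel (1 : ℝ)), midpoint_self]
  · rw [pair_comm, insert_comm (p₁, -1), insert_comm (p₀, -1),
      convexHull_insert_inter_snd_preimage_zero (c := -1) (by simp) (by norm_num)
        (neg_neg 1).symm (by rintro y (rfl | rfl | rfl) <;> rfl)]
    simp only [image_insert_eq, image_singleton,
      midpoint_prod_of_add_eq_zero (add_neg_cancel (1 : ℝ)), midpoint_self]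
    rw [midpoint_comm p₂ p₀, midpoint_comm p₂ p₁]

/-- The middle slice `ℝ² × {0}` meets the outer tetrahedra `Δ₀` and `Δ₂` of the
prism triangulation in normal triangles: `Δ₀ ∩ (ℝ² × {0})` is the triangle with
vertices `(p₀,0)`, `((p₀+p₁)/2,0)`, `((p₀+p₂)/2,0)` (linking `v₀`), and
`Δ₂ ∩ (ℝ² × {0})` is the triangle with vertices `((p₀+p₂)/2,0)`,
`((p₁+p₂)/2,0)`, `(p₂,0)` (linking `w₂`). -/
theorem prism_middle_slice_triangles
    (p₀ p₁ p₂ : EuclideanSpace ℝ (Fin 2))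
    (hp : AffineIndependent ℝ ![p₀, p₁, p₂]) :
    convexHull ℝ {((p₀, -1) : EuclideanSpace ℝ (Fin 2) × ℝ),
        (p₀, 1), (p₁, 1), (p₂, 1)} ∩
      (Set.univ ×ˢ ({0} : Set ℝ)) =
      convexHull ℝ {((p₀, 0) : EuclideanSpace ℝ (Fin 2) × ℝ),
        (midpoint ℝ p₀ p₁, 0), (midpoint ℝ p₀ p₂, 0)} ∧
    convexHull ℝ {((p₀, -1) : EuclideanSpace ℝ (Fin 2) × ℝ),
        (p₁, -1), (p₂, -1), (p₂, 1)} ∩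
      (Set.univ ×ˢ ({0} : Set ℝ)) =
      convexHull ℝ {((midpoint ℝ p₀ p₂, 0) : EuclideanSpace ℝ (Fin 2) × ℝ),
        (midpoint ℝ p₁ p₂, 0), (p₂, 0)} :=
  prism_middle_slice_triangles_general p₀ p₁ p₂
end

section
/- Let p₀, p₁, p₂ ∈ ℝ² be affinely independent, vᵢ = (pᵢ, -1), wᵢ = (pᵢ, 1). Then the middle slice of the prism triangulation meets the middle tetrahedron in a quadrilateral: Δ₁ ∩ (ℝ² × {0}) = convexHull ℝ {((p₀+p₁)/2, 0), ((p₀+p₂)/2, 0), (p₁, 0), ((p₁+p₂)/2, 0)}; this is the normal quadrilateral in which the middle surface T × {0} meets Δ₁ (linking the edge v₀v₁, i.e., separating the opposite edges v₀v₁ and w₁w₂ of Δ₁). -/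
/-!
A point of `Δ₁ = conv {v₀, v₁, w₁, w₂}` at height `0` puts total weight `1/2` on the bottom edge
`v₀v₁` and `1/2` on the top edge `w₁w₂`, so the slice is the Minkowski average
`½[p₀, p₁] + ½[p₁, p₂]`. The hull of a Minkowski sum of hulls is the hull of the sum of the
vertex sets, here the four midpoints `midpoint p₀ p₁`, `midpoint p₀ p₂`, `p₁`, `midpoint p₁ p₂`.
-/

open Set
open scoped Pointwise

section Slice

variable {𝕜 E F : Type*} [Field 𝕜] [LinearOrder 𝕜] [IsStrictOrderedRing 𝕜]
  [AddCommGroup E] [Module 𝕜 E] [AddCommGroup F] [Module 𝕜 F]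

theorem convexHull_prod_singleton (s : Set E) (c : F) :
    convexHull 𝕜 (s ×ˢ {c}) = convexHull 𝕜 s ×ˢ {c} := by
  rw [convexHull_prod, convexHull_singleton]

theorem convexHull_union_inter_prod_zero {s t : Set E} (hs : s.Nonempty) (ht : t.Nonempty) :
    convexHull 𝕜 (s ×ˢ {(-1 : 𝕜)} ∪ t ×ˢ {(1 : 𝕜)}) ∩ (univ ×ˢ {(0 : 𝕜)}) =
      convexHull 𝕜 ((2⁻¹ : 𝕜) • s + (2⁻¹ : 𝕜) • t) ×ˢ {0} := by
  rw [convexHull_union (hs.prod (singleton_nonempty _)) (ht.prod (singleton_nonempty _)),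
    convexHull_prod_singleton, convexHull_prod_singleton, convexHull_add, convexHull_smul,
    convexHull_smul]
  ext ⟨x, r⟩
  simp only [mem_inter_iff, mem_convexJoin, mem_prod, mem_univ, true_and, mem_singleton_iff]
  constructor
  · rintro ⟨⟨⟨a, _⟩, ⟨ha, rfl⟩, ⟨b, _⟩, ⟨hb, rfl⟩, θ₁, θ₂, -, -, hθ, hab⟩, rfl⟩
    simp only [Prod.smul_mk, Prod.mk_add_mk, Prod.mk.injEq, smul_eq_mul] at hab
    obtain ⟨rfl, hheight⟩ := hab
    obtain ⟨rfl, rfl⟩ : θ₁ = 2⁻¹ ∧ θ₂ = 2⁻¹ := by constructor <;> linarith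
    exact ⟨add_mem_add (smul_mem_smul_set ha) (smul_mem_smul_set hb), rfl⟩
  · rintro ⟨⟨_, ⟨a, ha, rfl⟩, _, ⟨b, hb, rfl⟩, rfl⟩, rfl⟩
    refine ⟨⟨(a, -1), ⟨ha, rfl⟩, (b, 1), ⟨hb, rfl⟩, 2⁻¹, 2⁻¹, by norm_num, by norm_num,
      by norm_num, ?_⟩, rfl⟩
    simp only [Prod.smul_mk, Prod.mk_add_mk, smul_eq_mul]
    norm_num

theorem half_smul_pair_add_half_smul_pair (p₀ p₁ p₂ : E) :
    (2⁻¹ : 𝕜) • ({p₀, p₁} : Set E) + (2⁻¹ : 𝕜) • {p₁, p₂} =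
      {midpoint 𝕜 p₀ p₁, midpoint 𝕜 p₀ p₂, p₁, midpoint 𝕜 p₁ p₂} := by
  have half_add_half (x y : E) : (2⁻¹ : 𝕜) • x + (2⁻¹ : 𝕜) • y = midpoint 𝕜 x y := by
    rw [midpoint_eq_smul_add, smul_add, invOf_eq_inv]
  simp only [insert_eq, smul_set_union, smul_set_singleton, union_add, add_union,
    singleton_add_singleton, half_add_half, midpoint_self]
  ext
  simp only [mem_union, mem_singleton_iff]
  tauto

end Slice

theorem prism_middle_slice_quadrilateral_general
    (p₀ p₁ p₂ : EuclideanSpace ℝ (Fin 2)) :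
    convexHull ℝ {((p₀, -1) : EuclideanSpace ℝ (Fin 2) × ℝ),
        (p₁, -1), (p₁, 1), (p₂, 1)} ∩
      (Set.univ ×ˢ ({0} : Set ℝ)) =
      convexHull ℝ {((midpoint ℝ p₀ p₁, 0) : EuclideanSpace ℝ (Fin 2) × ℝ),
        (midpoint ℝ p₀ p₂, 0), (p₁, 0), (midpoint ℝ p₁ p₂, 0)} := by
  have hΔ₁ : ({(p₀, -1), (p₁, -1), (p₁, 1), (p₂, 1)} : Set (EuclideanSpace ℝ (Fin 2) × ℝ)) =
      {p₀, p₁} ×ˢ {(-1 : ℝ)} ∪ {p₁, p₂} ×ˢ {(1 : ℝ)} := by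
    simp only [insert_prod, image_singleton, singleton_prod_singleton, singleton_union,
      insert_union]
  have hquad : ({(midpoint ℝ p₀ p₁, 0), (midpoint ℝ p₀ p₂, 0), (p₁, 0), (midpoint ℝ p₁ p₂, 0)} :
      Set (EuclideanSpace ℝ (Fin 2) × ℝ)) =
      {midpoint ℝ p₀ p₁, midpoint ℝ p₀ p₂, p₁, midpoint ℝ p₁ p₂} ×ˢ {(0 : ℝ)} := by
    simp only [insert_prod, image_singleton, singleton_prod_singleton, singleton_union]
  rw [hΔ₁, hquad, convexHull_union_inter_prod_zero (insert_nonempty _ _) (insert_nonempty _ _),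
    half_smul_pair_add_half_smul_pair, convexHull_prod_singleton]

/-- The middle slice `ℝ² × {0}` meets the middle tetrahedron `Δ₁` of the prism
triangulation in a normal quadrilateral with vertices `((p₀+p₁)/2,0)`,
`((p₀+p₂)/2,0)`, `(p₁,0)`, `((p₁+p₂)/2,0)`, linking the edge `v₀v₁` (i.e.
separating the opposite edges `v₀v₁` and `w₁w₂` of `Δ₁`). -/
theorem prism_middle_slice_quadrilateral
    (p₀ p₁ p₂ : EuclideanSpace ℝ (Fin 2))
    (hp : AffineIndependent ℝ ![p₀, p₁, p₂]) :
    convexHull ℝ {((p₀, -1) : EuclideanSpace ℝ (Fin 2) × ℝ),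
        (p₁, -1), (p₁, 1), (p₂, 1)} ∩
      (Set.univ ×ˢ ({0} : Set ℝ)) =
      convexHull ℝ {((midpoint ℝ p₀ p₁, 0) : EuclideanSpace ℝ (Fin 2) × ℝ),
        (midpoint ℝ p₀ p₂, 0), (p₁, 0), (midpoint ℝ p₁ p₂, 0)} :=
  prism_middle_slice_quadrilateral_general p₀ p₁ p₂
end
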